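/- arXiv:2211.04174 — 7 statements merged into one kernel-verified Lean document; each statement's English description precedes it below -/
import Mathlib

section
/- Let n ≥ 1 and let X_1, …, X_n be i.i.d. real random variables with E[X_1] = 0 admitting a Stein kernel τ_1 with E[τ_1(X_1)^2] < ∞. Let W = (X_1 + … + X_n)/√n and let τ := (1/n)·Σ_{i=1}^n τ_1(X_i). Then for every differentiable f : ℝ → ℝ that is bounded with bounded derivative, E[W·f(W)] = E[τ·f'(W)]. -/
/-!
Conditionally on the coordinates other than the `i`-th, `W = (∑ Xₖ)/√n` is a translate-dilate
`(Xᵢ + s)/√n` of `Xᵢ`, and `x ↦ f((x + s)/√n)` is again bounded with bounded derivative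
`f'((x + s)/√n)/√n`. The Stein identity of `X₁` therefore gives, after Fubini,
`E[Xᵢ f(W)] = E[τ₁(Xᵢ) f'(W)]/√n`; summing over `i` and dividing by `√n` gives the claim.
-/

open MeasureTheory ProbabilityTheory
open scoped ENNReal

/-- A measurable function `τ : ℝ → ℝ` is a *Stein kernel* for a distribution `μ` with mean `m`
if `E[(X - m) f(X)] = E[τ(X) f'(X)]` for every differentiable `f : ℝ → ℝ` that is bounded
with bounded derivative and for which both expectations exist. -/
def IsSteinKernel (μ : Measure ℝ) (m : ℝ) (τ : ℝ → ℝ) : Prop :=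
  Measurable τ ∧
  ∀ f : ℝ → ℝ, Differentiable ℝ f →
    (∃ M, ∀ x, |f x| ≤ M) → (∃ M, ∀ x, |deriv f x| ≤ M) →
    Integrable (fun x => (x - m) * f x) μ →
    Integrable (fun x => τ x * deriv f x) μ →
    ∫ x, (x - m) * f x ∂μ = ∫ x, τ x * deriv f x ∂μ

section SteinKernel

variable {μ : Measure ℝ} {m : ℝ} {τ f : ℝ → ℝ} {M M' : ℝ}

theorem IsSteinKernel.integral_sub_mul_eq [IsFiniteMeasure μ] (hτ : IsSteinKernel μ m τ)
    (hint : Integrable (fun x => x) μ) (hτint : Integrable τ μ) (hf : Differentiable ℝ f)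
    (hfb : ∀ x, |f x| ≤ M) (hf'b : ∀ x, |deriv f x| ≤ M') :
    ∫ x, (x - m) * f x ∂μ = ∫ x, τ x * deriv f x ∂μ :=
  hτ.2 f hf ⟨M, hfb⟩ ⟨M', hf'b⟩
    ((hint.sub (integrable_const m)).mul_bdd hf.continuous.aestronglyMeasurable
      (ae_of_all _ hfb))
    (hτint.mul_bdd (measurable_deriv f).aestronglyMeasurable (ae_of_all _ hf'b))

theorem hasDerivAt_comp_add_div (hf : Differentiable ℝ f) (s c x : ℝ) :
    HasDerivAt (fun x => f ((x + s) / c)) (deriv f ((x + s) / c) / c) x := by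
  have hlin : HasDerivAt (fun y => (y + s) / c) (1 / c) x := by
    simpa using ((hasDerivAt_id x).add_const s).div_const c
  rw [← mul_one_div]
  exact (hf _).hasDerivAt.comp x hlin

theorem IsSteinKernel.integral_mul_comp_add_div [IsFiniteMeasure μ] (hτ : IsSteinKernel μ 0 τ)
    (hint : Integrable (fun x => x) μ) (hτint : Integrable τ μ) (hf : Differentiable ℝ f)
    (hfb : ∀ x, |f x| ≤ M) (hf'b : ∀ x, |deriv f x| ≤ M') (s c : ℝ) :
    ∫ x, x * f ((x + s) / c) ∂μ = (∫ x, τ x * deriv f ((x + s) / c) ∂μ) / c := by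
  have hderiv : deriv (fun x => f ((x + s) / c)) = fun x => deriv f ((x + s) / c) / c :=
    funext fun x => (hasDerivAt_comp_add_div hf s c x).deriv
  have hstein := hτ.integral_sub_mul_eq hint hτint
    (fun x => (hasDerivAt_comp_add_div hf s c x).differentiableAt) (fun x => hfb _)
    (M' := M' / |c|) (fun x => by
      rw [hderiv, abs_div]
      gcongr
      exact hf'b _)
  simpa only [hderiv, sub_zero, mul_div_assoc', integral_div] using hstein

theorem integral_pi_eq_integral_integral_add_sum [SigmaFinite μ] {n : ℕ} (i : Fin (n + 1))
    (g : ℝ → ℝ → ℝ)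
    (hg : Integrable (fun ω : Fin (n + 1) → ℝ => g (ω i) (∑ k, ω k)) (Measure.pi fun _ => μ)) :
    ∫ ω, g (ω i) (∑ k, ω k) ∂(Measure.pi fun _ => μ)
      = ∫ y, ∫ x, g x (x + ∑ j, y j) ∂μ ∂(Measure.pi fun _ : Fin n => μ) := by
  let e := MeasurableEquiv.piFinSuccAbove (fun _ : Fin (n + 1) => ℝ) i
  have he := measurePreserving_piFinSuccAbove (fun _ => μ) i
  let G : ℝ × (Fin n → ℝ) → ℝ := fun p => g p.1 (p.1 + ∑ j, p.2 j)
  have hGe : ∀ ω : Fin (n + 1) → ℝ, g (ω i) (∑ k, ω k) = G (e ω) := fun ω => by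
    simp only [G, e, Fin.sum_univ_succAbove ω i]
    rfl
  simp_rw [hGe] at hg ⊢
  rw [he.integral_comp' G]
  exact integral_prod_symm G ((he.integrable_comp_emb e.measurableEmbedding).1 hg)

theorem integrable_comp_eval_mul_comp_sum_div [IsFiniteMeasure μ] {ι : Type*} [Fintype ι]
    {φ h : ℝ → ℝ} (hφ : Integrable φ μ) (hh : Measurable h) (hhb : ∀ x, |h x| ≤ M)
    (i : ι) (c : ℝ) :
    Integrable (fun ω : ι → ℝ => φ (ω i) * h ((∑ k, ω k) / c)) (Measure.pi fun _ => μ) :=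
  (integrable_comp_eval hφ).mul_bdd (hh.comp (by fun_prop)).aestronglyMeasurable
    (ae_of_all _ fun _ => hhb _)

theorem IsSteinKernel.integral_eval_mul_comp_sum_div [IsFiniteMeasure μ]
    (hτ : IsSteinKernel μ 0 τ) (hint : Integrable (fun x => x) μ) (hτint : Integrable τ μ)
    (hf : Differentiable ℝ f) (hfb : ∀ x, |f x| ≤ M) (hf'b : ∀ x, |deriv f x| ≤ M')
    {n : ℕ} (i : Fin n) (c : ℝ) :
    ∫ ω, ω i * f ((∑ k, ω k) / c) ∂(Measure.pi fun _ => μ)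
      = (∫ ω, τ (ω i) * deriv f ((∑ k, ω k) / c) ∂(Measure.pi fun _ => μ)) / c := by
  cases n with
  | zero => exact i.elim0
  | succ n =>
    rw [integral_pi_eq_integral_integral_add_sum i (fun x t => x * f (t / c))
        (integrable_comp_eval_mul_comp_sum_div hint hf.continuous.measurable hfb i c),
      integral_pi_eq_integral_integral_add_sum i (fun x t => τ x * deriv f (t / c))
        (integrable_comp_eval_mul_comp_sum_div hτint (measurable_deriv f) hf'b i c),
      ← integral_div]
    congr 1 with y
    exact hτ.integral_mul_comp_add_div hint hτint hf hfb hf'b _ c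

end SteinKernel

theorem stein_identity_for_sum_general
    (n : ℕ)
    (μ : Measure ℝ) (hprob : IsProbabilityMeasure μ)
    (hint : Integrable (fun x => x) μ)
    (τ₁ : ℝ → ℝ) (hτ : IsSteinKernel μ 0 τ₁)
    (hτ2 : Integrable (fun x => (τ₁ x) ^ 2) μ)
    (f : ℝ → ℝ) (hf : Differentiable ℝ f)
    (hfb : ∃ M, ∀ x, |f x| ≤ M) (hf'b : ∃ M, ∀ x, |deriv f x| ≤ M) :
    ∫ ω, ((∑ i, ω i) / Real.sqrt n) * f ((∑ i, ω i) / Real.sqrt n)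
        ∂(Measure.pi fun _ : Fin n => μ)
      = ∫ ω, ((∑ i, τ₁ (ω i)) / n) * deriv f ((∑ i, ω i) / Real.sqrt n)
          ∂(Measure.pi fun _ : Fin n => μ) := by
  obtain ⟨M, hM⟩ := hfb
  obtain ⟨M', hM'⟩ := hf'b
  have hτint : Integrable τ₁ μ :=
    ((memLp_two_iff_integrable_sq hτ.1.aestronglyMeasurable).2 hτ2).integrable one_le_two
  have hsqrt : Real.sqrt n * Real.sqrt n = n := Real.mul_self_sqrt n.cast_nonneg
  calc _ = (∑ i : Fin n, ∫ ω, ω i * f ((∑ k, ω k) / Real.sqrt n) ∂(Measure.pi fun _ => μ))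
          / Real.sqrt n := by
        rw [← integral_finsetSum _ fun (i : Fin n) _ =>
            integrable_comp_eval_mul_comp_sum_div hint hf.continuous.measurable hM i _,
          ← integral_div]
        simp only [div_mul_eq_mul_div, Finset.sum_mul]
    _ = (∑ i : Fin n,
          ∫ ω, τ₁ (ω i) * deriv f ((∑ k, ω k) / Real.sqrt n) ∂(Measure.pi fun _ => μ)) / n := by
        simp only [hτ.integral_eval_mul_comp_sum_div hint hτint hf hM hM', ← Finset.sum_div,
          div_div, hsqrt]
    _ = _ := by
        rw [← integral_finsetSum _ fun (i : Fin n) _ =>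
            integrable_comp_eval_mul_comp_sum_div hτint (measurable_deriv f) hM' i _,
          ← integral_div]
        simp only [div_mul_eq_mul_div, Finset.sum_mul]

/-- **Stein identity for the standardized sum.**
If `X₁, …, Xₙ` are i.i.d. with law `μ`, mean `0`, and Stein kernel `τ₁` with
`E[τ₁(X₁)²] < ∞`, then with `W = (∑ Xᵢ)/√n` and `τ = (1/n) ∑ τ₁(Xᵢ)`, one has
`E[W f(W)] = E[τ f'(W)]` for every differentiable `f` that is bounded with bounded
derivative. -/
theorem stein_identity_for_sum
    (n : ℕ) (hn : 1 ≤ n)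
    (μ : Measure ℝ) (hprob : IsProbabilityMeasure μ)
    (hint : Integrable (fun x => x) μ) (hmean : ∫ x, x ∂μ = 0)
    (τ₁ : ℝ → ℝ) (hτ : IsSteinKernel μ 0 τ₁)
    (hτ2 : Integrable (fun x => (τ₁ x) ^ 2) μ)
    (f : ℝ → ℝ) (hf : Differentiable ℝ f)
    (hfb : ∃ M, ∀ x, |f x| ≤ M) (hf'b : ∃ M, ∀ x, |deriv f x| ≤ M) :
    ∫ ω, ((∑ i, ω i) / Real.sqrt n) * f ((∑ i, ω i) / Real.sqrt n)
        ∂(Measure.pi fun _ : Fin n => μ)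
      = ∫ ω, ((∑ i, τ₁ (ω i)) / n) * deriv f ((∑ i, ω i) / Real.sqrt n)
          ∂(Measure.pi fun _ : Fin n => μ) :=
  stein_identity_for_sum_general n μ hprob hint τ₁ hτ hτ2 f hf hfb hf'b
end

section
/- Let Z ~ N(0,1) and let h : ℝ → ℝ be bounded and measurable. Define f(w) = e^{w^2/2}·∫_{−∞}^w (h(x) − E[h(Z)])·e^{−x^2/2} dx (the bounded solution of the Stein equation f'(w) − w·f(w) = h(w) − E[h(Z)]), set f'(w) := h(w) − E[h(Z)] + w·f(w), and define g(w) = e^{w^2/2}·∫_{−∞}^w (f'(x) − E[f'(Z)])·e^{−x^2/2} dx. Then E[g(Z)] = (1/3)·E[(Z^3 − 3Z)·h(Z)]. -/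
/-!
Write `φ(x) = exp (-x ^ 2 / 2)`. If `∫ k φ = 0`, the Stein solution `f_k` satisfies
`f_k(w) φ(w) = F(w) := ∫_{-∞}^w k φ`, and Fubini gives the moment identity
`∫ w ^ n F(w) dw = -(1 / (n + 1)) ∫ x ^ (n + 1) k(x) φ(x) dx`.
Since `h` is only measurable, `F` need not be differentiable, so Fubini replaces integration
by parts. For the outer solution (`n = 0`) the identity gives `∫ g φ = -∫ x (f' - c') φ`, and
`x f' = x (h - c) + x ^ 2 f`; for the inner one (`n = 2`) it gives
`∫ x ^ 2 f φ = -(1 / 3) ∫ x ^ 3 (h - c) φ`. Odd Gaussian moments vanish, which removes `c`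
and `c'`.
-/

open MeasureTheory Set Real Function
open scoped Interval

section TriangleKernel

variable {G : ℝ → ℝ} {n : ℕ}

/-- Splitting at `0` keeps the kernel integrable: for `w > 0` the primitive `∫ x in Iic w, G x`
is rewritten as `-∫ x in Ici w, G x`, which is where `∫ G = 0` enters. -/
noncomputable def triangleKernel (G : ℝ → ℝ) (n : ℕ) (x w : ℝ) : ℝ :=
  G x * ((Ioc x 0).indicator (· ^ n) w - (Ioc 0 x).indicator (· ^ n) w)

theorem aestronglyMeasurable_triangleKernel (hG : AEStronglyMeasurable G) :
    AEStronglyMeasurable (uncurry (triangleKernel G n)) (volume.prod volume) := by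
  have hneg : MeasurableSet {q : ℝ × ℝ | q.2 ∈ Ioc q.1 0} :=
    (measurableSet_lt measurable_fst measurable_snd).inter
      (measurableSet_le measurable_snd measurable_const)
  have hpos : MeasurableSet {q : ℝ × ℝ | q.2 ∈ Ioc 0 q.1} :=
    (measurableSet_lt measurable_const measurable_snd).inter
      (measurableSet_le measurable_snd measurable_fst)
  refine hG.comp_fst.mul (Measurable.aestronglyMeasurable ?_)
  simp only [indicator_apply]
  exact (Measurable.ite hneg (measurable_snd.pow_const n) measurable_const).sub
    (Measurable.ite hpos (measurable_snd.pow_const n) measurable_const)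

theorem norm_triangleKernel_le (x w : ℝ) :
    ‖triangleKernel G n x w‖ ≤ (Ι 0 x).indicator (fun _ ↦ |x| ^ n * ‖G x‖) w := by
  rw [triangleKernel, norm_mul, mul_comm]
  by_cases hw : w ∈ Ι 0 x
  · rw [indicator_of_mem hw]
    gcongr
    rcases mem_uIoc.1 hw with ⟨hw₀, hwx⟩ | ⟨hxw, hw₀⟩
    · rw [indicator_of_notMem fun h ↦ h.2.not_gt hw₀,
        indicator_of_mem (show w ∈ Ioc 0 x from ⟨hw₀, hwx⟩), zero_sub, norm_neg, norm_pow]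
      exact pow_le_pow_left₀ (norm_nonneg w) (abs_le_abs_of_nonneg hw₀.le hwx) n
    · rw [indicator_of_mem (show w ∈ Ioc x 0 from ⟨hxw, hw₀⟩),
        indicator_of_notMem fun h ↦ h.1.not_ge hw₀, sub_zero, norm_pow]
      exact pow_le_pow_left₀ (norm_nonneg w) (abs_le_abs_of_nonpos hw₀ hxw.le) n
  · have h₁ : w ∉ Ioc x 0 := fun h ↦ hw (Ioc_subset_uIoc' h)
    have h₂ : w ∉ Ioc 0 x := fun h ↦ hw (Ioc_subset_uIoc h)
    simp [indicator_of_notMem hw, indicator_of_notMem h₁, indicator_of_notMem h₂]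

theorem integrable_triangleKernel (x : ℝ) : Integrable (triangleKernel G n x) := by
  have hp : ∀ a b : ℝ, Integrable ((Ioc a b).indicator (· ^ n)) :=
    fun a b ↦ ((continuous_pow n).integrableOn_Ioc).integrable_indicator measurableSet_Ioc
  exact ((hp x 0).sub (hp 0 x)).const_mul (G x)

theorem integral_norm_triangleKernel_le (x : ℝ) :
    ∫ w, ‖triangleKernel G n x w‖ ≤ |x| ^ (n + 1) * ‖G x‖ := by
  calc ∫ w, ‖triangleKernel G n x w‖
      ≤ ∫ w, (Ι 0 x).indicator (fun _ ↦ |x| ^ n * ‖G x‖) w :=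
        integral_mono (integrable_triangleKernel x).norm
          ((integrableOn_const (by simp [volume_uIoc])).integrable_indicator measurableSet_uIoc)
          (norm_triangleKernel_le x)
    _ = |x| ^ (n + 1) * ‖G x‖ := by
        rw [integral_indicator_const _ measurableSet_uIoc, measureReal_def, volume_uIoc,
          ENNReal.toReal_ofReal (abs_nonneg _), sub_zero, smul_eq_mul]
        ring

theorem integrable_uncurry_triangleKernel (hG : AEStronglyMeasurable G)
    (hGn : Integrable fun x ↦ x ^ (n + 1) * G x) :
    Integrable (uncurry (triangleKernel G n)) (volume.prod volume) := by
  refine (integrable_prod_iff (aestronglyMeasurable_triangleKernel hG)).2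
    ⟨.of_forall integrable_triangleKernel, hGn.norm.mono' ?_ (.of_forall fun x ↦ ?_)⟩
  · exact (aestronglyMeasurable_triangleKernel hG).norm.integral_prod_right'
  · rw [norm_of_nonneg (integral_nonneg fun _ ↦ norm_nonneg _), norm_mul, norm_pow, norm_eq_abs]
    exact integral_norm_triangleKernel_le x

theorem integral_triangleKernel_right (x : ℝ) :
    ∫ w, triangleKernel G n x w = -(x ^ (n + 1) / (n + 1)) * G x := by
  have hp : ∀ a b : ℝ, IntegrableOn (· ^ n) (Ioc a b) :=
    fun a b ↦ (continuous_pow n).integrableOn_Ioc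
  calc ∫ w, triangleKernel G n x w
      = G x * ((∫ w in Ioc x 0, w ^ n) - ∫ w in Ioc 0 x, w ^ n) := by
        rw [← integral_indicator measurableSet_Ioc, ← integral_indicator measurableSet_Ioc,
          ← integral_sub ((hp x 0).integrable_indicator measurableSet_Ioc)
            ((hp 0 x).integrable_indicator measurableSet_Ioc), ← integral_const_mul]
        rfl
    _ = G x * -∫ w in (0 : ℝ)..x, w ^ n := by rw [← neg_sub]; rfl
    _ = -(x ^ (n + 1) / (n + 1)) * G x := by rw [integral_pow]; ring

theorem integral_triangleKernel_left (hG : Integrable G) (h0 : ∫ x, G x = 0) (w : ℝ) :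
    ∫ x, triangleKernel G n x w = w ^ n * ∫ x in Iic w, G x := by
  rw [integral_Iic_eq_integral_Iio]
  rcases le_or_gt w 0 with hw | hw
  · have hK : ∀ x, triangleKernel G n x w = (Iio w).indicator G x * w ^ n := by
      intro x
      by_cases hx : x < w <;> simp [triangleKernel, hx, hw, not_lt.2 hw]
    simp_rw [hK, integral_mul_const, integral_indicator measurableSet_Iio]
    ring
  · have hK : ∀ x, triangleKernel G n x w = -((Ici w).indicator G x * w ^ n) := by
      intro x
      by_cases hx : w ≤ x <;> simp [triangleKernel, hx, hw, not_le.2 hw]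
    have hsplit := intervalIntegral.integral_Iio_add_Ici (b := w) hG.integrableOn hG.integrableOn
    simp_rw [hK, integral_neg, integral_mul_const, integral_indicator measurableSet_Ici]
    linear_combination (-w ^ n) * (hsplit.trans h0)

theorem integrable_pow_mul_integral_Iic (hG : Integrable G)
    (hGn : Integrable fun x ↦ x ^ (n + 1) * G x) (h0 : ∫ x, G x = 0) :
    Integrable fun w ↦ w ^ n * ∫ x in Iic w, G x :=
  (integrable_uncurry_triangleKernel hG.1 hGn).integral_prod_right.congr
    (.of_forall (integral_triangleKernel_left hG h0))

theorem integral_pow_mul_integral_Iic (hG : Integrable G)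
    (hGn : Integrable fun x ↦ x ^ (n + 1) * G x) (h0 : ∫ x, G x = 0) :
    ∫ w, w ^ n * ∫ x in Iic w, G x = -(∫ x, x ^ (n + 1) * G x) / (n + 1) := by
  calc ∫ w, w ^ n * ∫ x in Iic w, G x
      = ∫ w, ∫ x, triangleKernel G n x w := by simp_rw [integral_triangleKernel_left hG h0]
    _ = ∫ x, ∫ w, triangleKernel G n x w :=
        (integral_integral_swap (integrable_uncurry_triangleKernel hG.1 hGn)).symm
    _ = ∫ x, -(x ^ (n + 1) / (n + 1)) * G x := by simp_rw [integral_triangleKernel_right]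
    _ = -(∫ x, x ^ (n + 1) * G x) / (n + 1) := by
        simp_rw [neg_mul, div_mul_eq_mul_div, integral_neg, integral_div]
        ring

end TriangleKernel

section GaussianMoments

theorem integrable_pow_mul_exp_neg_sq_div_two (n : ℕ) :
    Integrable fun x : ℝ ↦ x ^ n * exp (-x ^ 2 / 2) := by
  have hb : ∀ x : ℝ, -(1 / 2) * x ^ 2 = -x ^ 2 / 2 := fun x ↦ by ring
  simpa only [rpow_natCast, hb] using integrable_rpow_mul_exp_neg_mul_sq (b := 1 / 2)
    (by norm_num) (s := n) (by linarith [n.cast_nonneg (α := ℝ)])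

theorem integral_exp_neg_sq_div_two : ∫ x : ℝ, exp (-x ^ 2 / 2) = √(2 * π) := by
  rw [show 2 * π = π / (1 / 2) by ring, ← integral_gaussian]
  congr! 3
  ring

theorem integral_pow_mul_exp_neg_sq_div_two_of_odd {n : ℕ} (hn : Odd n) :
    ∫ x : ℝ, x ^ n * exp (-x ^ 2 / 2) = 0 := by
  have h := integral_neg_eq_self (fun x : ℝ ↦ x ^ n * exp (-x ^ 2 / 2)) volume
  simp only [hn.neg_pow, even_two.neg_pow, neg_mul, integral_neg] at h
  linarith

variable {k : ℝ → ℝ}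

theorem integrable_pow_mul_mul_exp_of_bounded {M : ℝ} (hk : AEStronglyMeasurable k)
    (hM : ∀ x, |k x| ≤ M) (n : ℕ) :
    Integrable fun x ↦ x ^ n * (k x * exp (-x ^ 2 / 2)) := by
  refine ((integrable_pow_mul_exp_neg_sq_div_two n).bdd_mul hk (.of_forall hM)).congr
    (.of_forall fun x ↦ ?_)
  ring

theorem integrable_pow_mul_sub_mul_exp {n : ℕ} (a : ℝ)
    (hk : Integrable fun x ↦ x ^ n * (k x * exp (-x ^ 2 / 2))) :
    Integrable fun x ↦ x ^ n * ((k x - a) * exp (-x ^ 2 / 2)) :=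
  (hk.sub ((integrable_pow_mul_exp_neg_sq_div_two n).const_mul a)).congr
    (.of_forall fun x ↦ by simp only [Pi.sub_apply]; ring)

theorem integrable_sub_mul_exp (a : ℝ) (hk : Integrable fun x ↦ k x * exp (-x ^ 2 / 2)) :
    Integrable fun x ↦ (k x - a) * exp (-x ^ 2 / 2) := by
  simpa using integrable_pow_mul_sub_mul_exp (n := 0) a (by simpa using hk)

theorem integral_pow_mul_sub_mul_exp_of_odd {n : ℕ} (hn : Odd n) (a : ℝ)
    (hk : Integrable fun x ↦ x ^ n * (k x * exp (-x ^ 2 / 2))) :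
    ∫ x, x ^ n * ((k x - a) * exp (-x ^ 2 / 2)) = ∫ x, x ^ n * (k x * exp (-x ^ 2 / 2)) := by
  have hsub : ∀ x, x ^ n * ((k x - a) * exp (-x ^ 2 / 2))
      = x ^ n * (k x * exp (-x ^ 2 / 2)) - a * (x ^ n * exp (-x ^ 2 / 2)) := fun x ↦ by ring
  simp_rw [hsub]
  rw [integral_sub hk ((integrable_pow_mul_exp_neg_sq_div_two n).const_mul a), integral_const_mul,
    integral_pow_mul_exp_neg_sq_div_two_of_odd hn, mul_zero, sub_zero]

end GaussianMoments

section SteinSolution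

noncomputable def gaussianMean (k : ℝ → ℝ) : ℝ :=
  ∫ x, k x * (exp (-x ^ 2 / 2) / √(2 * π))

noncomputable def steinSolution (k : ℝ → ℝ) (w : ℝ) : ℝ :=
  exp (w ^ 2 / 2) * ∫ x in Iic w, (k x - gaussianMean k) * exp (-x ^ 2 / 2)

variable {k : ℝ → ℝ} {n : ℕ}

theorem steinSolution_mul_exp (k : ℝ → ℝ) (w : ℝ) :
    steinSolution k w * exp (-w ^ 2 / 2)
      = ∫ x in Iic w, (k x - gaussianMean k) * exp (-x ^ 2 / 2) := by
  rw [steinSolution, mul_right_comm, ← exp_add, neg_div, add_neg_cancel, exp_zero, one_mul]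

theorem integral_sub_gaussianMean_mul_exp (hk : Integrable fun x ↦ k x * exp (-x ^ 2 / 2)) :
    ∫ x, (k x - gaussianMean k) * exp (-x ^ 2 / 2) = 0 := by
  have hsub : ∀ x, (k x - gaussianMean k) * exp (-x ^ 2 / 2)
      = k x * exp (-x ^ 2 / 2) - gaussianMean k * exp (-x ^ 2 / 2) := fun x ↦ by ring
  simp_rw [hsub]
  rw [integral_sub hk ((integrable_pow_mul_exp_neg_sq_div_two 0).congr (by simp) |>.const_mul _),
    integral_const_mul, integral_exp_neg_sq_div_two, gaussianMean]
  simp_rw [mul_div_assoc', integral_div]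
  field_simp
  ring

theorem integrable_pow_mul_steinSolution_mul_exp
    (hk : Integrable fun x ↦ k x * exp (-x ^ 2 / 2))
    (hkn : Integrable fun x ↦ x ^ (n + 1) * (k x * exp (-x ^ 2 / 2))) :
    Integrable fun w ↦ w ^ n * (steinSolution k w * exp (-w ^ 2 / 2)) := by
  simp_rw [steinSolution_mul_exp]
  exact integrable_pow_mul_integral_Iic (integrable_sub_mul_exp _ hk)
    (integrable_pow_mul_sub_mul_exp _ hkn) (integral_sub_gaussianMean_mul_exp hk)

theorem integral_pow_mul_steinSolution_mul_exp_of_even (hn : Even n)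
    (hk : Integrable fun x ↦ k x * exp (-x ^ 2 / 2))
    (hkn : Integrable fun x ↦ x ^ (n + 1) * (k x * exp (-x ^ 2 / 2))) :
    ∫ w, w ^ n * (steinSolution k w * exp (-w ^ 2 / 2))
      = -(∫ x, x ^ (n + 1) * (k x * exp (-x ^ 2 / 2))) / (n + 1) := by
  simp_rw [steinSolution_mul_exp]
  rw [integral_pow_mul_integral_Iic (integrable_sub_mul_exp _ hk)
    (integrable_pow_mul_sub_mul_exp _ hkn) (integral_sub_gaussianMean_mul_exp hk),
    integral_pow_mul_sub_mul_exp_of_odd hn.add_one _ hkn]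

theorem integral_steinSolution_mul_exp (hk : Integrable fun x ↦ k x * exp (-x ^ 2 / 2))
    (hk₁ : Integrable fun x ↦ x * (k x * exp (-x ^ 2 / 2))) :
    ∫ w, steinSolution k w * exp (-w ^ 2 / 2) = -∫ x, x * (k x * exp (-x ^ 2 / 2)) := by
  simpa using
    integral_pow_mul_steinSolution_mul_exp_of_even (n := 0) .zero hk (by simpa using hk₁)

/-- The right-hand side `f' = k - E k(Z) + w f` of the Stein equation; it is the derivative of
`steinSolution k` only almost everywhere. -/
noncomputable def steinSolutionDeriv (k : ℝ → ℝ) (w : ℝ) : ℝ :=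
  k w - gaussianMean k + w * steinSolution k w

theorem pow_mul_steinSolutionDeriv_mul_exp (m : ℕ) (x : ℝ) :
    x ^ m * (steinSolutionDeriv k x * exp (-x ^ 2 / 2))
      = x ^ m * ((k x - gaussianMean k) * exp (-x ^ 2 / 2))
        + x ^ (m + 1) * (steinSolution k x * exp (-x ^ 2 / 2)) := by
  rw [steinSolutionDeriv]
  ring

theorem integrable_pow_mul_steinSolutionDeriv_mul_exp
    (hk : ∀ m : ℕ, Integrable fun x ↦ x ^ m * (k x * exp (-x ^ 2 / 2))) (m : ℕ) :
    Integrable fun x ↦ x ^ m * (steinSolutionDeriv k x * exp (-x ^ 2 / 2)) := by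
  simp_rw [pow_mul_steinSolutionDeriv_mul_exp]
  exact (integrable_pow_mul_sub_mul_exp _ (hk m)).add
    (integrable_pow_mul_steinSolution_mul_exp (by simpa using hk 0) (hk (m + 2)))

theorem integral_mul_steinSolutionDeriv_mul_exp
    (hk : ∀ m : ℕ, Integrable fun x ↦ x ^ m * (k x * exp (-x ^ 2 / 2))) :
    ∫ x, x * (steinSolutionDeriv k x * exp (-x ^ 2 / 2))
      = (∫ x, x * (k x * exp (-x ^ 2 / 2))) - (∫ x, x ^ 3 * (k x * exp (-x ^ 2 / 2))) / 3 := by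
  have hk₀ : Integrable fun x ↦ k x * exp (-x ^ 2 / 2) := by simpa using hk 0
  calc ∫ x, x * (steinSolutionDeriv k x * exp (-x ^ 2 / 2))
      = (∫ x, x ^ 1 * ((k x - gaussianMean k) * exp (-x ^ 2 / 2)))
        + ∫ x, x ^ 2 * (steinSolution k x * exp (-x ^ 2 / 2)) := by
        rw [← integral_add (integrable_pow_mul_sub_mul_exp _ (hk 1))
          (integrable_pow_mul_steinSolution_mul_exp hk₀ (hk 3))]
        simp_rw [← pow_mul_steinSolutionDeriv_mul_exp 1, pow_one]
    _ = (∫ x, x * (k x * exp (-x ^ 2 / 2))) - (∫ x, x ^ 3 * (k x * exp (-x ^ 2 / 2))) / 3 := by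
        rw [integral_pow_mul_sub_mul_exp_of_odd odd_one _ (hk 1),
          integral_pow_mul_steinSolution_mul_exp_of_even (n := 2) even_two hk₀ (hk 3)]
        simp only [pow_one, Nat.cast_ofNat]
        ring

end SteinSolution

/-- **Gaussian expectation of the twice-iterated Stein equation solution.**
Let `Z ~ N(0,1)`, `h : ℝ → ℝ` bounded measurable, `c = E[h(Z)]`, let `f` be the bounded
solution of the Stein equation `f'(w) - w f(w) = h(w) - c`, let `f' = h - c + w f(w)` be its
derivative, `c' = E[f'(Z)]`, and let `g` be the bounded solution of the Stein equation
`g'(w) - w g(w) = f'(w) - c'`. Then `E[g(Z)] = (1/3) E[(Z³ - 3Z) h(Z)]`. -/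
theorem gaussian_expectation_iterated_stein_solution
    (h : ℝ → ℝ) (hm : Measurable h) (M : ℝ) (hM : ∀ x, |h x| ≤ M)
    (c : ℝ) (hc : c = ∫ x, h x * (Real.exp (-x ^ 2 / 2) / Real.sqrt (2 * Real.pi)))
    (f : ℝ → ℝ)
    (hf : ∀ w, f w = Real.exp (w ^ 2 / 2) * ∫ x in Set.Iic w, (h x - c) * Real.exp (-x ^ 2 / 2))
    (f' : ℝ → ℝ) (hf' : ∀ w, f' w = h w - c + w * f w)
    (c' : ℝ) (hc' : c' = ∫ x, f' x * (Real.exp (-x ^ 2 / 2) / Real.sqrt (2 * Real.pi)))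
    (g : ℝ → ℝ)
    (hg : ∀ w, g w = Real.exp (w ^ 2 / 2) *
      ∫ x in Set.Iic w, (f' x - c') * Real.exp (-x ^ 2 / 2)) :
    ∫ w, g w * (Real.exp (-w ^ 2 / 2) / Real.sqrt (2 * Real.pi))
      = (1 / 3) * ∫ w, (w ^ 3 - 3 * w) * h w * (Real.exp (-w ^ 2 / 2) / Real.sqrt (2 * Real.pi)) := by
  obtain rfl : c = gaussianMean h := hc
  obtain rfl : f = steinSolution h := funext hf
  obtain rfl : f' = steinSolutionDeriv h := funext hf'
  obtain rfl : c' = gaussianMean (steinSolutionDeriv h) := hc'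
  obtain rfl : g = steinSolution (steinSolutionDeriv h) := funext hg
  have hh := integrable_pow_mul_mul_exp_of_bounded hm.aestronglyMeasurable hM
  have hmoments : ∫ w, (w ^ 3 - 3 * w) * h w * exp (-w ^ 2 / 2)
      = (∫ w, w ^ 3 * (h w * exp (-w ^ 2 / 2))) - 3 * ∫ w, w * (h w * exp (-w ^ 2 / 2)) := by
    rw [← integral_const_mul, ← integral_sub (hh 3) (by simpa using (hh 1).const_mul 3)]
    congr 1 with w
    ring
  simp_rw [← mul_div_assoc, integral_div]
  rw [integral_steinSolution_mul_exp
    (by simpa using integrable_pow_mul_steinSolutionDeriv_mul_exp hh 0)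
    (by simpa using integrable_pow_mul_steinSolutionDeriv_mul_exp hh 1),
    integral_mul_steinSolutionDeriv_mul_exp hh, hmoments]
  ring
end

section
/- Let h : ℝ → ℝ be bounded and measurable, let P : ℝ → ℝ be a polynomial, let σ > 0, let Z ~ N(0,1), and define h_1(x) = E[h(σZ + x)·P(Z)] for x ∈ ℝ. Then for every integer k ≥ 0, h_1 is k times differentiable on ℝ and there is a constant C_{P,k}, depending only on P and k (not on h, σ, or x), such that |h_1^{(k)}(x)| ≤ C_{P,k}·‖h‖_∞/σ^k for all x ∈ ℝ. -/
open MeasureTheory ProbabilityTheory Real Polynomial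
open scoped Nat

/-!
Against Lebesgue measure, `h₁(x) = ∫ K_P(y) h(σy + x) dy` with `K_P = P · φ`, `φ` the standard
normal density. Substituting `y ↦ y - x/σ` moves `x` into the kernel, and since
`K_P' = -K_{XP - P'}`, differentiation under the integral sign gives `h₁' = σ⁻¹ h₁[XP - P']`,
the same kind of function for another polynomial. Iterating, `h₁⁽ᵏ⁾ = σ⁻ᵏ h₁[Tᵏ P]` with
`T P = XP - P'`, and `|h₁[Q](x)| ≤ ‖K_Q‖₁ ‖h‖_∞`.
-/

noncomputable section

section IteratedDeriv

variable {ι 𝕜 : Type*} [NontriviallyNormedField 𝕜] {F : ι → 𝕜 → 𝕜} {T : ι → ι} {c : 𝕜}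

theorem contDiff_of_hasDerivAt_mul_iterate (hF : ∀ i x, HasDerivAt (F i) (c * F (T i) x) x)
    (n : ℕ) (i : ι) : ContDiff 𝕜 n (F i) := by
  induction n generalizing i with
  | zero => exact contDiff_zero.2 (continuous_iff_continuousAt.2 fun x => (hF i x).continuousAt)
  | succ n ih =>
    rw [Nat.cast_succ, contDiff_succ_iff_deriv, funext fun x => (hF i x).deriv]
    exact ⟨fun x => (hF i x).differentiableAt, by simp, contDiff_const.mul (ih (T i))⟩

theorem iteratedDeriv_eq_of_hasDerivAt_mul_iterate
    (hF : ∀ i x, HasDerivAt (F i) (c * F (T i) x) x) (n : ℕ) (i : ι) :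
    iteratedDeriv n (F i) = fun x => c ^ n * F (T^[n] i) x := by
  induction n generalizing i with
  | zero => simp
  | succ n ih =>
    ext x
    rw [iteratedDeriv_succ', funext fun x => (hF i x).deriv, iteratedDeriv_const_mul_field, ih,
      Function.iterate_succ_apply, pow_succ', mul_assoc]

end IteratedDeriv

theorem hasDerivAt_integral_comp_sub_mul {κ κ' g h : ℝ → ℝ} {M : ℝ}
    (hκ : ∀ y, HasDerivAt κ (κ' y) y) (hκ' : Continuous κ') (hκi : Integrable κ)
    (hg : Integrable g) (hdom : ∀ s u, |u| ≤ 1 → |κ' (s - u)| ≤ g s)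
    (hh : AEStronglyMeasurable h) (hM : ∀ t, |h t| ≤ M) (x₀ : ℝ) :
    HasDerivAt (fun x => ∫ t, κ (t - x) * h t) (-∫ t, κ' (t - x₀) * h t) x₀ := by
  have hκc : Continuous κ := continuous_iff_continuousAt.2 fun y => (hκ y).continuousAt
  have hM' : ∀ᵐ t, ‖h t‖ ≤ M := ae_of_all _ fun t => (Real.norm_eq_abs _).trans_le (hM t)
  have key := hasDerivAt_integral_of_dominated_loc_of_deriv_le
    (F := fun x t => κ (t - x) * h t) (F' := fun x t => -(κ' (t - x) * h t))
    (bound := fun t => g (t - x₀) * M) (Metric.ball_mem_nhds x₀ one_pos)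
    (.of_forall fun x => (hκc.comp (continuous_sub_right x)).aestronglyMeasurable.mul hh)
    ((hκi.comp_sub_right x₀).mul_bdd hh hM')
    ((hκ'.comp (continuous_sub_right x₀)).aestronglyMeasurable.mul hh).neg
    (ae_of_all _ fun t x hx => ?_) ((hg.comp_sub_right x₀).mul_const M)
    (ae_of_all _ fun t x _ => ?_)
  · simpa only [integral_neg] using key.2
  · have hx : |x - x₀| ≤ 1 := (Metric.mem_ball.1 hx).le
    rw [norm_neg, norm_mul, Real.norm_eq_abs, Real.norm_eq_abs,
      show t - x = t - x₀ - (x - x₀) by ring]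
    exact mul_le_mul (hdom _ _ hx) (hM t) (abs_nonneg _) ((abs_nonneg _).trans (hdom _ _ hx))
  · have := ((hκ (t - x)).comp x ((hasDerivAt_id x).const_sub t)).mul_const (h t)
    simpa using this

-- Its iterates on `1` are the probabilists' Hermite polynomials.
def hermiteRaise (P : ℝ[X]) : ℝ[X] := X * P - derivative P

def gaussKernel (P : ℝ[X]) (y : ℝ) : ℝ := P.eval y * gaussianPDFReal 0 1 y

lemma gaussianPDFReal_zero_one (y : ℝ) :
    gaussianPDFReal 0 1 y = (√(2 * π))⁻¹ * exp (-y ^ 2 / 2) := by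
  simp [gaussianPDFReal]

lemma hasDerivAt_gaussianPDFReal_zero_one (y : ℝ) :
    HasDerivAt (gaussianPDFReal 0 1) (-y * gaussianPDFReal 0 1 y) y := by
  rw [gaussianPDFReal_zero_one, funext gaussianPDFReal_zero_one]
  have hq : HasDerivAt (fun x : ℝ => -x ^ 2 / 2) (-y) y := by
    refine (((hasDerivAt_id' y).fun_pow 2).fun_neg.div_const 2).congr_deriv ?_
    ring
  refine (hq.exp.const_mul (√(2 * π))⁻¹).congr_deriv ?_
  ring

lemma hasDerivAt_gaussKernel (P : ℝ[X]) (y : ℝ) :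
    HasDerivAt (gaussKernel P) (-gaussKernel (hermiteRaise P) y) y := by
  refine ((P.hasDerivAt y).fun_mul (hasDerivAt_gaussianPDFReal_zero_one y)).congr_deriv ?_
  simp only [gaussKernel, hermiteRaise, eval_sub, eval_mul, eval_X]
  ring

lemma continuous_gaussKernel (P : ℝ[X]) : Continuous (gaussKernel P) :=
  continuous_iff_continuousAt.2 fun y => (hasDerivAt_gaussKernel P y).continuousAt

lemma Polynomial.exists_abs_eval_le_mul_exp_abs (P : ℝ[X]) :
    ∃ C, 0 ≤ C ∧ ∀ y, |P.eval y| ≤ C * exp |y| := by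
  induction P using Polynomial.induction_on' with
  | add p q hp hq =>
    obtain ⟨C, hC, hp⟩ := hp
    obtain ⟨D, hD, hq⟩ := hq
    refine ⟨C + D, add_nonneg hC hD, fun y => ?_⟩
    rw [eval_add, add_mul]
    exact (abs_add_le _ _).trans (add_le_add (hp y) (hq y))
  | monomial n a =>
    refine ⟨|a| * n !, by positivity, fun y => ?_⟩
    rw [eval_monomial, abs_mul, abs_pow, mul_assoc]
    gcongr
    rw [← div_le_iff₀' (by positivity)]
    exact pow_div_factorial_le_exp _ (abs_nonneg y) n

lemma exists_abs_gaussKernel_le (P : ℝ[X]) :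
    ∃ C, ∀ y, |gaussKernel P y| ≤ C * exp (-4⁻¹ * y ^ 2) := by
  obtain ⟨C, hC, hP⟩ := P.exists_abs_eval_le_mul_exp_abs
  refine ⟨C * (√(2 * π))⁻¹ * exp 1, fun y => ?_⟩
  have hexp : exp |y| * exp (-y ^ 2 / 2) ≤ exp 1 * exp (-4⁻¹ * y ^ 2) := by
    rw [← exp_add, ← exp_add, exp_le_exp]
    nlinarith [sq_nonneg (|y| - 2), sq_abs y]
  calc |gaussKernel P y| = |P.eval y| * ((√(2 * π))⁻¹ * exp (-y ^ 2 / 2)) := by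
        rw [gaussKernel, abs_mul, abs_of_nonneg (gaussianPDFReal_nonneg 0 1 y),
          gaussianPDFReal_zero_one]
    _ ≤ C * exp |y| * ((√(2 * π))⁻¹ * exp (-y ^ 2 / 2)) := by gcongr; exact hP y
    _ = C * (√(2 * π))⁻¹ * (exp |y| * exp (-y ^ 2 / 2)) := by ring
    _ ≤ C * (√(2 * π))⁻¹ * (exp 1 * exp (-4⁻¹ * y ^ 2)) := by gcongr
    _ = C * (√(2 * π))⁻¹ * exp 1 * exp (-4⁻¹ * y ^ 2) := by ring

lemma integrable_gaussKernel (P : ℝ[X]) : Integrable (gaussKernel P) := by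
  obtain ⟨C, hC⟩ := exists_abs_gaussKernel_le P
  exact ((integrable_exp_neg_mul_sq (by norm_num)).const_mul C).mono'
    (continuous_gaussKernel P).aestronglyMeasurable (ae_of_all _ hC)

lemma exists_integrable_abs_gaussKernel_sub_le (P : ℝ[X]) :
    ∃ g, Integrable g ∧ ∀ s u, |u| ≤ 1 → |gaussKernel P (s - u)| ≤ g s := by
  obtain ⟨C, hC⟩ := exists_abs_gaussKernel_le P
  refine ⟨fun s => C * exp 4⁻¹ * exp (-8⁻¹ * s ^ 2),
    (integrable_exp_neg_mul_sq (by norm_num)).const_mul _, fun s u hu => (hC _).trans ?_⟩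
  have hC0 : 0 ≤ C := (abs_nonneg _).trans ((hC 0).trans_eq (by simp))
  dsimp only
  rw [mul_assoc, ← exp_add]
  gcongr _ * exp ?_
  -- `(s - u)² ≥ s²/2 - u²`
  nlinarith [sq_nonneg (s - 2 * u), sq_abs u, abs_nonneg u]

def gaussianSmoothing (P : ℝ[X]) (σ : ℝ) (h : ℝ → ℝ) (x : ℝ) : ℝ :=
  ∫ y, P.eval y * h (σ * y + x) ∂(gaussianReal 0 1)

section GaussianSmoothing

variable {σ M : ℝ} {h : ℝ → ℝ}

lemma gaussianSmoothing_eq_integral_gaussKernel (P : ℝ[X]) (x : ℝ) :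
    gaussianSmoothing P σ h x = ∫ y, gaussKernel P y * h (σ * y + x) := by
  rw [gaussianSmoothing, integral_gaussianReal_eq_integral_smul one_ne_zero]
  simp only [smul_eq_mul, gaussKernel]
  congr 1 with y
  ring

lemma gaussianSmoothing_eq_integral_gaussKernel_sub (P : ℝ[X]) (hσ : σ ≠ 0) (x : ℝ) :
    gaussianSmoothing P σ h x = ∫ t, gaussKernel P (t - x / σ) * h (σ * t) := by
  rw [gaussianSmoothing_eq_integral_gaussKernel,
    ← integral_sub_right_eq_self (fun y => gaussKernel P y * h (σ * y + x)) (x / σ)]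
  congr 1 with t
  rw [mul_sub, mul_div_cancel₀ x hσ, sub_add_cancel]

lemma abs_gaussianSmoothing_le (P : ℝ[X]) (hM : ∀ t, |h t| ≤ M) (x : ℝ) :
    |gaussianSmoothing P σ h x| ≤ (∫ y, |gaussKernel P y|) * M := by
  rw [gaussianSmoothing_eq_integral_gaussKernel, ← Real.norm_eq_abs, ← integral_mul_const]
  refine norm_integral_le_of_norm_le ((integrable_gaussKernel P).abs.mul_const M)
    (ae_of_all _ fun y => ?_)
  rw [norm_mul, Real.norm_eq_abs, Real.norm_eq_abs]
  exact mul_le_mul_of_nonneg_left (hM _) (abs_nonneg _)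

lemma hasDerivAt_gaussianSmoothing (P : ℝ[X]) (hσ : σ ≠ 0) (hh : Measurable h)
    (hM : ∀ t, |h t| ≤ M) (x : ℝ) :
    HasDerivAt (gaussianSmoothing P σ h)
      (σ⁻¹ * gaussianSmoothing (hermiteRaise P) σ h x) x := by
  obtain ⟨g, hg, hdom⟩ := exists_integrable_abs_gaussKernel_sub_le (hermiteRaise P)
  have hG := hasDerivAt_integral_comp_sub_mul (hasDerivAt_gaussKernel P)
    (continuous_gaussKernel _).neg (integrable_gaussKernel P) hg
    (fun s u hu => (abs_neg _).trans_le (hdom s u hu))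
    (h := fun t => h (σ * t)) (hh.comp (measurable_const_mul σ)).aestronglyMeasurable
    (fun t => hM (σ * t)) (x / σ)
  rw [funext (gaussianSmoothing_eq_integral_gaussKernel_sub P hσ),
    gaussianSmoothing_eq_integral_gaussKernel_sub _ hσ]
  refine (hG.comp x ((hasDerivAt_id x).div_const σ)).congr_deriv ?_
  simp only [neg_mul, integral_neg]
  ring

end GaussianSmoothing

/-- **Smoothing by Gaussian convolution, bounds on derivatives.**
For a polynomial `P` and `k ∈ ℕ`, there is a constant `C` depending only on `P` and `k`
such that for every bounded measurable `h : ℝ → ℝ` with `|h| ≤ M`, every `σ > 0`, the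
function `h₁(x) = E[h(σZ + x) P(Z)]` (with `Z ~ N(0,1)`) is `k` times differentiable and
`|h₁⁽ᵏ⁾(x)| ≤ C M / σᵏ` for all `x`. -/
theorem gaussian_smoothing_deriv_bound (P : Polynomial ℝ) (k : ℕ) :
    ∃ C : ℝ, ∀ h : ℝ → ℝ, Measurable h → ∀ M : ℝ, (∀ x, |h x| ≤ M) →
      ∀ σ : ℝ, 0 < σ →
      ContDiff ℝ k (fun x => ∫ y, P.eval y * h (σ * y + x) ∂(gaussianReal 0 1)) ∧
      ∀ x : ℝ,
        |iteratedDeriv k (fun x => ∫ y, P.eval y * h (σ * y + x) ∂(gaussianReal 0 1)) x|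
          ≤ C * M / σ ^ k := by
  refine ⟨∫ y, |gaussKernel (hermiteRaise^[k] P) y|, fun h hh M hM σ hσ => ?_⟩
  have hderiv : ∀ R x, HasDerivAt (gaussianSmoothing R σ h)
      (σ⁻¹ * gaussianSmoothing (hermiteRaise R) σ h x) x :=
    fun R => hasDerivAt_gaussianSmoothing R hσ.ne' hh hM
  refine ⟨contDiff_of_hasDerivAt_mul_iterate hderiv k P, fun x => ?_⟩
  change |iteratedDeriv k (gaussianSmoothing P σ h) x| ≤ _
  rw [iteratedDeriv_eq_of_hasDerivAt_mul_iterate hderiv k P]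
  calc |(σ⁻¹) ^ k * gaussianSmoothing (hermiteRaise^[k] P) σ h x|
      = |gaussianSmoothing (hermiteRaise^[k] P) σ h x| / σ ^ k := by
        rw [abs_mul, abs_of_nonneg (by positivity), inv_pow, inv_mul_eq_div]
    _ ≤ _ := by gcongr; exact abs_gaussianSmoothing_le _ hM x

end
end

section
/- Let h : ℝ → ℝ be bounded and measurable, let P : ℝ → ℝ be a polynomial, let Z ~ N(0,1), and define h_2(σ) = E[h(σZ)·P(Z)] for σ > 0. Then for every integer k ≥ 0, h_2 is k times differentiable on (0,∞) and there is a constant C̃_{P,k}, depending only on P and k (not on h or σ), such that |h_2^{(k)}(σ)| ≤ C̃_{P,k}·‖h‖_∞/σ^k for all σ > 0. -/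
/-!
Substituting `x = σ y` turns `h₂(σ) = E[h(σZ) P(Z)]` into `∫ h(x) σ⁻¹ φ(x/σ) P(x/σ) dx`, so `σ`
only enters a smooth kernel, which is dominated by a Gaussian locally uniformly in `σ`.
Differentiating under the integral gives `σ h₂' = E[h(σZ) (T P)(Z)]` with
`T Q = (X² - 1) Q - X Q'`. Since `σᵏ (d/dσ)ᵏ = D (D - 1) ⋯ (D - k + 1)` for `D = σ d/dσ`, this
yields `h₂⁽ᵏ⁾(σ) = σ⁻ᵏ E[h(σZ) Rₖ(Z)]` with `Rₖ₊₁ = (T - k) Rₖ`, hence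
`|h₂⁽ᵏ⁾(σ)| ≤ E|Rₖ(Z)| ‖h‖∞ / σᵏ`.
-/

open MeasureTheory ProbabilityTheory Real Set Filter Polynomial
open scoped NNReal Nat Topology

lemma hasDerivAt_gaussianPDFReal (μ : ℝ) (v : ℝ≥0) (x : ℝ) :
    HasDerivAt (gaussianPDFReal μ v) (-((x - μ) / v) * gaussianPDFReal μ v x) x := by
  have hsq : HasDerivAt (fun y => -(y - μ) ^ 2 / (2 * v)) (-(2 * (x - μ)) / (2 * v)) x := by
    simpa using (((hasDerivAt_id x).sub_const μ).fun_pow 2).neg.div_const (2 * (v : ℝ))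
  refine (hsq.exp.const_mul (√(2 * π * v))⁻¹).congr_deriv ?_
  simp only [gaussianPDFReal]
  ring

lemma hasDerivAt_inv_mul_comp_div {f : ℝ → ℝ} {f' x σ : ℝ} (hσ : σ ≠ 0)
    (hf : HasDerivAt f f' (x / σ)) :
    HasDerivAt (fun s => s⁻¹ * f (x / s)) (-(σ ^ 2)⁻¹ * (f (x / σ) + x / σ * f')) σ := by
  have hdiv : HasDerivAt (fun s => x / s) (-(x / σ ^ 2)) σ := by
    simpa [div_eq_mul_inv] using (hasDerivAt_inv hσ).const_mul x
  refine ((hasDerivAt_inv hσ).fun_mul (hf.comp σ hdiv)).congr_deriv ?_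
  simp only [Function.comp_apply]
  field_simp
  ring

lemma hasDerivAt_inv_pow (k : ℕ) {x : ℝ} (hx : x ≠ 0) :
    HasDerivAt (fun s : ℝ => (s ^ k)⁻¹) (-k * (x ^ (k + 1))⁻¹) x := by
  have := hasDerivAt_zpow (-k : ℤ) x (Or.inl hx)
  simp only [zpow_neg, zpow_natCast, Int.cast_neg, Int.cast_natCast] at this
  refine this.congr_deriv ?_
  rw [show (-k : ℤ) - 1 = -((k + 1 : ℕ) : ℤ) by push_cast; ring, zpow_neg, zpow_natCast]

lemma abs_pow_mul_exp_neg_sq_div_four_le (t : ℝ) (n : ℕ) :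
    |t| ^ n * exp (-t ^ 2 / 4) ≤ n ! * exp 1 := by
  have hpow : |t| ^ n ≤ n ! * exp |t| := by
    rw [← div_le_iff₀' (by positivity)]
    exact pow_div_factorial_le_exp _ (abs_nonneg t) n
  calc |t| ^ n * exp (-t ^ 2 / 4) ≤ n ! * (exp |t| * exp (-t ^ 2 / 4)) := by
        rw [← mul_assoc]; gcongr
    _ ≤ n ! * exp 1 := by
        rw [← exp_add]
        gcongr
        nlinarith [sq_nonneg (|t| - 2), sq_abs t]

lemma exists_abs_eval_mul_exp_le (Q : ℝ[X]) :
    ∃ C, ∀ t, |Q.eval t| * exp (-t ^ 2 / 4) ≤ C := by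
  refine ⟨∑ i ∈ Finset.range (Q.natDegree + 1), |Q.coeff i| * (i ! * exp 1), fun t => ?_⟩
  calc |Q.eval t| * exp (-t ^ 2 / 4)
      ≤ (∑ i ∈ Finset.range (Q.natDegree + 1), |Q.coeff i| * |t| ^ i) * exp (-t ^ 2 / 4) := by
        gcongr
        rw [eval_eq_sum_range]
        refine (Finset.abs_sum_le_sum_abs _ _).trans_eq ?_
        simp [abs_mul, abs_pow]
    _ = ∑ i ∈ Finset.range (Q.natDegree + 1), |Q.coeff i| * (|t| ^ i * exp (-t ^ 2 / 4)) := by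
        simp only [Finset.sum_mul, mul_assoc]
    _ ≤ _ := Finset.sum_le_sum fun i _ =>
        mul_le_mul_of_nonneg_left (abs_pow_mul_exp_neg_sq_div_four_le t i) (abs_nonneg _)

lemma integrable_eval_gaussianReal (Q : ℝ[X]) (μ : ℝ) (v : ℝ≥0) :
    Integrable (fun y => Q.eval y) (gaussianReal μ v) := by
  simp_rw [eval_eq_sum_range]
  refine integrable_finsetSum _ fun i _ => Integrable.const_mul ?_ _
  exact ((memLp_id_gaussianReal i).integrable_norm_pow').mono' (by fun_prop)
    (ae_of_all _ fun y => by simp)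

noncomputable def dilationGenerator (Q : ℝ[X]) : ℝ[X] :=
  (X ^ 2 - 1) * Q - X * derivative Q

noncomputable def dilationDerivPoly (P : ℝ[X]) : ℕ → ℝ[X]
  | 0 => P
  | k + 1 => dilationGenerator (dilationDerivPoly P k) - (k : ℝ) • dilationDerivPoly P k

noncomputable def dilationKernel (Q : ℝ[X]) (σ x : ℝ) : ℝ :=
  σ⁻¹ * (gaussianPDFReal 0 1 (x / σ) * Q.eval (x / σ))

lemma measurable_dilationKernel (Q : ℝ[X]) (σ : ℝ) : Measurable (dilationKernel Q σ) := by
  unfold dilationKernel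
  fun_prop

lemma hasDerivAt_dilationKernel (Q : ℝ[X]) (x : ℝ) {σ : ℝ} (hσ : σ ≠ 0) :
    HasDerivAt (fun s => dilationKernel Q s x)
      (σ⁻¹ * dilationKernel (dilationGenerator Q) σ x) σ := by
  refine (hasDerivAt_inv_mul_comp_div hσ
    ((hasDerivAt_gaussianPDFReal 0 1 (x / σ)).mul (Q.hasDerivAt (x / σ)))).congr_deriv ?_
  simp only [Pi.mul_apply, sub_zero, NNReal.coe_one, div_one, neg_mul, dilationKernel,
    dilationGenerator, eval_sub, eval_mul, eval_pow, eval_X, eval_one]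
  ring

/-- Half of the Gaussian factor absorbs the polynomial, see `exists_abs_eval_mul_exp_le`. -/
lemma exists_abs_dilationKernel_le (Q : ℝ[X]) :
    ∃ C, ∀ {a b s : ℝ}, 0 < a → a ≤ s → s ≤ b → ∀ x,
      |dilationKernel Q s x| ≤ C * a⁻¹ * exp (-(4 * b ^ 2)⁻¹ * x ^ 2) := by
  obtain ⟨C, hC⟩ := exists_abs_eval_mul_exp_le Q
  refine ⟨(√(2 * π))⁻¹ * C, ?_⟩
  intro a b s ha has hsb x
  have hs := ha.trans_le has
  set t := x / s
  have hpdf : gaussianPDFReal 0 1 t = (√(2 * π))⁻¹ * exp (-t ^ 2 / 4) * exp (-t ^ 2 / 4) := by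
    simp only [gaussianPDFReal, NNReal.coe_one, mul_one, sub_zero, mul_assoc, ← exp_add]
    ring_nf
  have htail : exp (-t ^ 2 / 4) ≤ exp (-(4 * b ^ 2)⁻¹ * x ^ 2) := by
    have : (4 * b ^ 2)⁻¹ * x ^ 2 ≤ t ^ 2 / 4 := by
      rw [div_pow, div_div, inv_mul_eq_div, mul_comm (s ^ 2)]
      gcongr
    exact exp_le_exp.2 (by linarith)
  calc |dilationKernel Q s x|
      = s⁻¹ * ((√(2 * π))⁻¹ * exp (-t ^ 2 / 4) * (|Q.eval t| * exp (-t ^ 2 / 4))) := by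
        rw [dilationKernel, hpdf, abs_mul, abs_of_pos (inv_pos.2 hs), abs_mul,
          abs_of_nonneg (by positivity)]
        ring
    _ ≤ a⁻¹ * ((√(2 * π))⁻¹ * exp (-(4 * b ^ 2)⁻¹ * x ^ 2) * C) := by
        gcongr
        exact hC t
    _ = _ := by ring

lemma integrable_dilationKernel (Q : ℝ[X]) {σ : ℝ} (hσ : 0 < σ) :
    Integrable (dilationKernel Q σ) := by
  obtain ⟨C, hC⟩ := exists_abs_dilationKernel_le Q
  exact ((integrable_exp_neg_mul_sq (by positivity)).const_mul (C * σ⁻¹)).mono'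
    (measurable_dilationKernel Q σ).aestronglyMeasurable
    (ae_of_all _ fun x => hC hσ le_rfl le_rfl x)

noncomputable def gaussDilation (h : ℝ → ℝ) (Q : ℝ[X]) (σ : ℝ) : ℝ :=
  ∫ y, Q.eval y * h (σ * y) ∂gaussianReal 0 1

section

variable {h : ℝ → ℝ} {M : ℝ}

lemma gaussDilation_eq_integral_dilationKernel (Q : ℝ[X]) {σ : ℝ} (hσ : 0 < σ) :
    gaussDilation h Q σ = ∫ x, dilationKernel Q σ x * h x := by
  set g := fun y => gaussianPDFReal 0 1 y • (Q.eval y * h (σ * y))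
  calc gaussDilation h Q σ = ∫ y, g y := integral_gaussianReal_eq_integral_smul one_ne_zero
    _ = σ⁻¹ * ∫ x, g (x / σ) := by
        rw [Measure.integral_comp_div, abs_of_pos hσ, smul_eq_mul, inv_mul_cancel_left₀ hσ.ne']
    _ = ∫ x, dilationKernel Q σ x * h x := by
        rw [← integral_const_mul]
        congr with x
        simp only [g, dilationKernel, smul_eq_mul, mul_div_cancel₀ x hσ.ne']
        ring

lemma integrable_eval_mul_comp_mul (hh : Measurable h) (hM : ∀ x, |h x| ≤ M) (Q : ℝ[X])
    (σ μ : ℝ) (v : ℝ≥0) :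
    Integrable (fun y => Q.eval y * h (σ * y)) (gaussianReal μ v) :=
  (integrable_eval_gaussianReal Q μ v).mul_bdd
    (hh.comp (measurable_const_mul σ)).aestronglyMeasurable (ae_of_all _ fun y => hM (σ * y))

lemma gaussDilation_sub_smul (hh : Measurable h) (hM : ∀ x, |h x| ≤ M) (Q₁ Q₂ : ℝ[X])
    (c σ : ℝ) :
    gaussDilation h (Q₁ - c • Q₂) σ = gaussDilation h Q₁ σ - c * gaussDilation h Q₂ σ := by
  simp only [gaussDilation, eval_sub, eval_smul, smul_eq_mul, sub_mul, mul_assoc]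
  rw [integral_sub (integrable_eval_mul_comp_mul hh hM Q₁ σ 0 1)
    ((integrable_eval_mul_comp_mul hh hM Q₂ σ 0 1).const_mul c), integral_const_mul]

lemma abs_gaussDilation_le (hM : ∀ x, |h x| ≤ M) (Q : ℝ[X]) (σ : ℝ) :
    |gaussDilation h Q σ| ≤ (∫ y, |Q.eval y| ∂gaussianReal 0 1) * M := by
  rw [← integral_mul_const, ← Real.norm_eq_abs]
  refine norm_integral_le_of_norm_le ((integrable_eval_gaussianReal Q 0 1).abs.mul_const M)
    (ae_of_all _ fun y => ?_)
  rw [Real.norm_eq_abs, abs_mul]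
  exact mul_le_mul_of_nonneg_left (hM _) (abs_nonneg _)

lemma hasDerivAt_gaussDilation (hh : Measurable h) (hM : ∀ x, |h x| ≤ M) (Q : ℝ[X]) {σ : ℝ}
    (hσ : 0 < σ) :
    HasDerivAt (gaussDilation h Q) (σ⁻¹ * gaussDilation h (dilationGenerator Q) σ) σ := by
  obtain ⟨C, hC⟩ := exists_abs_dilationKernel_le (dilationGenerator Q)
  have hnhds : Ioo (σ / 2) (2 * σ) ∈ 𝓝 σ := Ioo_mem_nhds (by linarith) (by linarith)
  have hparam := hasDerivAt_integral_of_dominated_loc_of_deriv_le (μ := volume) hnhds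
    (F := fun s x => dilationKernel Q s x * h x)
    (F' := fun s x => s⁻¹ * (dilationKernel (dilationGenerator Q) s x * h x))
    (bound := fun x => (σ / 2)⁻¹ * (C * (σ / 2)⁻¹ * exp (-(4 * (2 * σ) ^ 2)⁻¹ * x ^ 2) * M))
    (Eventually.of_forall fun s => ((measurable_dilationKernel Q s).mul hh).aestronglyMeasurable)
    ((integrable_dilationKernel Q hσ).mul_bdd hh.aestronglyMeasurable (ae_of_all _ hM))
    ((((measurable_dilationKernel _ σ).mul hh).const_mul σ⁻¹).aestronglyMeasurable)
    (ae_of_all _ fun x s hs => ?_)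
    ((((integrable_exp_neg_mul_sq (by positivity)).const_mul _).mul_const M).const_mul _)
    (ae_of_all _ fun x s hs => ?_)
  · have hloc : gaussDilation h Q =ᶠ[𝓝 σ] fun s => ∫ x, dilationKernel Q s x * h x :=
      eventually_of_mem (Ioi_mem_nhds hσ) fun s hs => gaussDilation_eq_integral_dilationKernel Q hs
    rw [gaussDilation_eq_integral_dilationKernel _ hσ, ← integral_const_mul]
    exact hparam.2.congr_of_eventuallyEq hloc
  · have hs0 : 0 < s := by linarith [hs.1]
    have hK := hC (by linarith) hs.1.le hs.2.le x
    rw [Real.norm_eq_abs, abs_mul, abs_mul, abs_inv, abs_of_pos hs0]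
    exact mul_le_mul (inv_anti₀ (by linarith) hs.1.le)
      (mul_le_mul hK (hM x) (abs_nonneg _) ((abs_nonneg _).trans hK)) (by positivity)
      (by positivity)
  · have hs0 : 0 < s := by linarith [hs.1]
    exact ((hasDerivAt_dilationKernel Q x hs0.ne').mul_const (h x)).congr_deriv (mul_assoc _ _ _)

lemma contDiffOn_gaussDilation (hh : Measurable h) (hM : ∀ x, |h x| ≤ M) (n : ℕ) (Q : ℝ[X]) :
    ContDiffOn ℝ n (gaussDilation h Q) (Ioi 0) := by
  induction n generalizing Q with
  | zero =>
    exact contDiffOn_zero.2 fun σ hσ =>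
      (hasDerivAt_gaussDilation hh hM Q hσ).continuousAt.continuousWithinAt
  | succ n ih =>
    rw [Nat.cast_succ, contDiffOn_succ_iff_deriv_of_isOpen isOpen_Ioi]
    refine ⟨fun σ hσ =>
      (hasDerivAt_gaussDilation hh hM Q hσ).differentiableAt.differentiableWithinAt, by simp, ?_⟩
    exact ((contDiffOn_id.inv fun s hs => ne_of_gt hs).mul (ih _)).congr fun s hs =>
      (hasDerivAt_gaussDilation hh hM Q hs).deriv

lemma iteratedDerivWithin_gaussDilation (hh : Measurable h) (hM : ∀ x, |h x| ≤ M) (P : ℝ[X])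
    (k : ℕ) {σ : ℝ} (hσ : 0 < σ) :
    iteratedDerivWithin k (gaussDilation h P) (Ioi 0) σ =
      (σ ^ k)⁻¹ * gaussDilation h (dilationDerivPoly P k) σ := by
  induction k generalizing σ with
  | zero => simp [dilationDerivPoly]
  | succ k ih =>
    have hder : HasDerivAt (fun s => (s ^ k)⁻¹ * gaussDilation h (dilationDerivPoly P k) s)
        ((σ ^ (k + 1))⁻¹ * gaussDilation h (dilationDerivPoly P (k + 1)) σ) σ := by
      refine ((hasDerivAt_inv_pow k hσ.ne').fun_mul
        (hasDerivAt_gaussDilation hh hM _ hσ)).congr_deriv ?_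
      rw [dilationDerivPoly, gaussDilation_sub_smul hh hM]
      field_simp
      ring
    rw [iteratedDerivWithin_succ]
    exact (hder.hasDerivWithinAt.congr (fun s hs => ih hs) (ih hσ)).derivWithin
      (uniqueDiffOn_Ioi 0 σ hσ)

end

/-- **Smoothing by Gaussian dilation, bounds on derivatives in the scale parameter.**
For a polynomial `P` and `k ∈ ℕ`, there is a constant `C̃` depending only on `P` and `k`
such that for every bounded measurable `h : ℝ → ℝ` with `|h| ≤ M`, the function
`h₂(σ) = E[h(σZ) P(Z)]` (with `Z ~ N(0,1)`) is `k` times differentiable on `(0, ∞)` and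
`|h₂⁽ᵏ⁾(σ)| ≤ C̃ M / σᵏ` for all `σ > 0`. -/
theorem gaussian_dilation_deriv_bound (P : Polynomial ℝ) (k : ℕ) :
    ∃ C : ℝ, ∀ h : ℝ → ℝ, Measurable h → ∀ M : ℝ, (∀ x, |h x| ≤ M) →
      ContDiffOn ℝ k (fun σ => ∫ y, P.eval y * h (σ * y) ∂(gaussianReal 0 1))
        (Set.Ioi (0 : ℝ)) ∧
      ∀ σ : ℝ, 0 < σ →
        |iteratedDerivWithin k (fun σ => ∫ y, P.eval y * h (σ * y) ∂(gaussianReal 0 1))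
            (Set.Ioi (0 : ℝ)) σ|
          ≤ C * M / σ ^ k := by
  refine ⟨∫ y, |(dilationDerivPoly P k).eval y| ∂gaussianReal 0 1,
    fun h hh M hM => ⟨contDiffOn_gaussDilation hh hM k P, fun σ hσ => ?_⟩⟩
  change |iteratedDerivWithin k (gaussDilation h P) (Ioi 0) σ| ≤ _
  rw [iteratedDerivWithin_gaussDilation hh hM P k hσ, abs_mul, abs_of_pos (by positivity),
    div_eq_inv_mul]
  exact mul_le_mul_of_nonneg_left (abs_gaussDilation_le hM _ σ) (by positivity)
end

section
/- There exists a universal constant C such that the following holds. Let n ≥ 1 and let X_1, …, X_n be i.i.d. Bernoulli(1/2) random variables. Then for every x in the set A_n := {2z/√n − √n : z = 0, 1, …, n} ∩ [−n^{1/4}/8, n^{1/4}/8], |P((2/√n)·Σ_{i=1}^n (X_i − 1/2) = x) − (2/√(2πn))·e^{−x^2/2}| ≤ C·((1 + x^4)/n)·(2/√(2πn))·e^{−x^2/2}. -/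
open MeasureTheory ProbabilityTheory
open scoped ENNReal

/-!
The event is `∑ ωᵢ = z`, of probability `C(n, z) / 2ⁿ`, where `x = (2z - n) / √n`. Put
`u = x / √n`, so that `z = n(1 + u)/2` and `n - z = n(1 - u)/2`. Stirling's formula
`k! = sₖ √(2k) (k/e)^k` with Robbins' bounds `√π ≤ sₖ ≤ √π e^{1/(12k)}` writes `C(n, z) / 2ⁿ`
exactly as the Gaussian term times `e^L`, where `L` collects three errors: the Stirling factors,
`O(1/n)` since `z, n - z ≥ 7n/16`; the Jacobian `(1 - u²)^{-1/2}`, `O(u²) = O(x²/n)`; and the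
entropy `(n/2)((1+u) log(1+u) + (1-u) log(1-u) - u²) = O(n u⁴) = O(x⁴/n)`. The window
`|x| ≤ n^{1/4}/8` gives `|u| ≤ 1/8` and `|L| ≤ 1`, hence `|e^L - 1| ≤ 2|L| ≤ 2(1 + x⁴)/n`.
-/

section BinomialLaw

open Finset

lemma ae_eq_zero_or_eq_one {μ : Measure ℝ} [IsProbabilityMeasure μ] (h : μ {0} + μ {1} = 1) :
    ∀ᵐ a ∂μ, a = 0 ∨ a = 1 := by
  have hpair : μ ({0} ∪ {1}) = 1 := by
    rw [measure_union (by simp) (measurableSet_singleton 1), h]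
  filter_upwards [mem_ae_iff.2 ((prob_compl_eq_zero_iff (by measurability)).2 hpair)] with a ha
  rwa [Set.mem_union, Set.mem_singleton_iff, Set.mem_singleton_iff] at ha

lemma pi_singleton_indicator {μ : Measure ℝ} [SigmaFinite μ] {n : ℕ} (t : Finset (Fin n)) :
    Measure.pi (fun _ : Fin n => μ) {fun i => if i ∈ t then 1 else 0} =
      μ {1} ^ #t * μ {0} ^ (n - #t) := by
  rw [Measure.pi_singleton]
  simp only [apply_ite (fun a : ℝ => μ {a})]
  rw [prod_ite, prod_const, prod_const]
  simp [filter_not, card_sdiff]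

lemma pi_setOf_sum_eq_natCast {μ : Measure ℝ} [IsFiniteMeasure μ]
    (hμ : ∀ᵐ a ∂μ, a = 0 ∨ a = 1) (n z : ℕ) :
    Measure.pi (fun _ : Fin n => μ) {ω | ∑ i, ω i = z} =
      n.choose z * μ {1} ^ z * μ {0} ^ (n - z) := by
  classical
  set ind : Finset (Fin n) → Fin n → ℝ := fun t i => if i ∈ t then 1 else 0
  have hind : Function.Injective ind := by
    intro s t hst
    ext i
    have := congrFun hst i
    by_cases hs : i ∈ s <;> by_cases ht : i ∈ t <;> simp_all [ind]
  have hsupp : ∀ᵐ ω ∂Measure.pi (fun _ : Fin n => μ), ω ∈ univ.image ind := by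
    filter_upwards [Filter.eventually_all.2 fun i : Fin n =>
      Measure.tendsto_eval_ae_ae (i := i).eventually hμ] with ω hω
    refine mem_image.2 ⟨univ.filter (ω · = 1), mem_univ _, funext fun i => ?_⟩
    rcases hω i with h | h <;> simp [ind, h]
  rw [Measure.ae_mem_finset_iff.mp hsupp, Measure.finsetSum_apply,
    sum_image fun s _ t _ h => hind h]
  simp only [Measure.smul_apply, smul_eq_mul, Measure.dirac_apply, Set.indicator_apply,
    Set.mem_ofPred_eq, Pi.one_apply, pi_singleton_indicator, ind, sum_boole, filter_mem_eq_inter,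
    univ_inter, Nat.cast_inj, mul_boole]
  rw [← sum_filter, sum_congr rfl fun t ht => by rw [(mem_filter.1 ht).2], sum_const,
    ← powerset_univ, ← powersetCard_eq_filter, card_powersetCard, card_univ, Fintype.card_fin,
    nsmul_eq_mul, mul_assoc]

lemma setOf_two_div_sqrt_mul_sum_sub_half_eq {n z : ℕ} (hn : n ≠ 0) {x : ℝ}
    (hx : √n * x = 2 * z - n) :
    {ω : Fin n → ℝ | 2 / √n * ∑ i, (ω i - 1 / 2) = x} = {ω | ∑ i, ω i = (z : ℝ)} := by
  have hsqrt : (0 : ℝ) < √n := by positivity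
  ext ω
  simp only [Set.mem_ofPred_eq, sum_sub_distrib, sum_const, card_univ, Fintype.card_fin,
    nsmul_eq_mul]
  rw [← mul_right_inj' hsqrt.ne', hx, ← mul_assoc, mul_div_cancel₀ _ hsqrt.ne']
  constructor <;> intro h <;> linarith

end BinomialLaw

section Analytic

open Real Stirling

lemma log_stirlingSeq_le_log_sqrt_pi_add {k : ℕ} (hk : k ≠ 0) :
    log (stirlingSeq k) ≤ log √π + 1 / (12 * k) := by
  set a : ℕ → ℝ := fun j => log (stirlingSeq (j + 1)) - 1 / (12 * (j + 1 : ℕ))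
  -- Robbins' bound makes `log sⱼ - 1/(12 j)` increase to its limit `log √π`.
  have ha : Monotone a := monotone_nat_of_le_succ fun j => by
    have hstep := log_stirlingSeq_sdiff_le (j + 1)
    have htelescope : (1 : ℝ) / (12 * (j + 1 : ℕ) * ((j + 1 : ℕ) + 1)) =
        1 / (12 * (j + 1 : ℕ)) - 1 / (12 * (j + 1 + 1 : ℕ)) := by
      push_cast; field_simp; ring
    simp only [a]; linarith
  have hlim : Filter.Tendsto a Filter.atTop (nhds (log √π - 0)) :=
    ((continuousAt_log (by positivity)).tendsto.comp
      (tendsto_stirlingSeq_sqrt_pi.comp (Filter.tendsto_add_atTop_nat 1))).sub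
      (tendsto_const_nhds.div_atTop ((tendsto_natCast_atTop_atTop.comp
        (Filter.tendsto_add_atTop_nat 1)).const_mul_atTop (by norm_num)))
  obtain ⟨j, rfl⟩ := Nat.exists_eq_add_one_of_ne_zero hk
  have := ha.ge_of_tendsto hlim j
  simp only [a, sub_zero] at this
  linarith

lemma log_factorial_eq {k : ℕ} (hk : k ≠ 0) :
    log k.factorial = log (stirlingSeq k) + log (2 * k) / 2 + k * (log k - 1) := by
  rw [stirlingSeq, log_div (by positivity) (by positivity), log_mul (by positivity) (by positivity),
    log_sqrt (by positivity), log_pow, log_div (by positivity) (by positivity), log_exp]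
  ring

lemma abs_log_one_sub_add_taylor_le {y : ℝ} (hy : |y| ≤ 1 / 8) :
    |log (1 - y) + y + y ^ 2 / 2 + y ^ 3 / 3 + y ^ 4 / 4| ≤ y ^ 4 / 7 := by
  have h := abs_log_sub_add_sum_range_le (hy.trans_lt (by norm_num)) 4
  simp only [Finset.sum_range_succ, Finset.sum_range_zero] at h
  norm_num at h
  have hy4 : |y| ^ 4 = y ^ 4 := Even.pow_abs (by decide) y
  calc _ = |y + y ^ 2 / 2 + y ^ 3 / 3 + y ^ 4 / 4 + log (1 - y)| := by ring_nf
    _ ≤ |y| ^ 5 / (1 - |y|) := h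
    _ ≤ y ^ 4 / 7 := by
      rw [div_le_div_iff₀ (by linarith) (by norm_num), pow_succ, hy4]
      nlinarith [abs_nonneg y, pow_nonneg (abs_nonneg y) 4]

lemma abs_entropy_sub_sq_le {u : ℝ} (hu : |u| ≤ 1 / 8) :
    |(1 + u) * log (1 + u) + (1 - u) * log (1 - u) - u ^ 2| ≤ u ^ 4 := by
  have hplus := abs_le.1 (abs_log_one_sub_add_taylor_le (y := -u) (by rwa [abs_neg]))
  have hminus := abs_le.1 (abs_log_one_sub_add_taylor_le hu)
  rw [sub_neg_eq_add] at hplus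
  obtain ⟨hu_lo, hu_hi⟩ := abs_le.1 hu
  rw [abs_le]
  constructor <;> nlinarith [pow_nonneg (sq_nonneg u) 2]

lemma neg_log_one_sub_le {v : ℝ} (hv0 : 0 ≤ v) (hv : v ≤ 1 / 2) : -log (1 - v) ≤ 2 * v := by
  have h := one_sub_inv_le_log_of_pos (x := 1 - v) (by linarith)
  have : (1 - v)⁻¹ ≤ 1 + 2 * v := by
    rw [inv_le_iff_one_le_mul₀ (by linarith)]; nlinarith
  linarith

noncomputable def binomialCorrection (n z m : ℕ) (u : ℝ) : ℝ :=
  (log (stirlingSeq n) - log (stirlingSeq z) - log (stirlingSeq m) + log √π)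
    - log (1 - u ^ 2) / 2 - n / 2 * ((1 + u) * log (1 + u) + (1 - u) * log (1 - u) - u ^ 2)

lemma choose_div_two_pow_eq {n z m : ℕ} (hz : z ≠ 0) (hm : m ≠ 0) (hzm : z + m = n) {u : ℝ}
    (hu : n * u = z - m) :
    (n.choose z : ℝ) / 2 ^ n =
      2 / √(2 * π * n) * exp (-(n * u ^ 2) / 2) * exp (binomialCorrection n z m u) := by
  have hn : n ≠ 0 := by omega
  have hn' : (n : ℝ) = z + m := by rw [← hzm]; push_cast; ring
  have hchoose : (n.choose z : ℝ) * z.factorial * m.factorial = n.factorial := by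
    rw [← hzm, Nat.choose_symm_add]
    exact_mod_cast Nat.add_choose_mul_factorial_mul_factorial z m
  have hchoose_pos : (0 : ℝ) < n.choose z := by exact_mod_cast Nat.choose_pos (by omega)
  have hlog_choose : log (n.choose z) = log n.factorial - log z.factorial - log m.factorial := by
    rw [← hchoose, log_mul (by positivity) (by positivity), log_mul (by positivity) (by positivity)]
    ring
  have hplus : 1 + u = 2 * z / n := by field_simp; linarith
  have hminus : 1 - u = 2 * m / n := by field_simp; linarith
  have hlog_plus : log (1 + u) = log 2 + log z - log n := by
    rw [hplus, log_div (by positivity) (by positivity), log_mul two_ne_zero (by positivity)]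
  have hlog_minus : log (1 - u) = log 2 + log m - log n := by
    rw [hminus, log_div (by positivity) (by positivity), log_mul two_ne_zero (by positivity)]
  have hlog_sq : log (1 - u ^ 2) = log (1 + u) + log (1 - u) := by
    rw [← log_mul (by rw [hplus]; positivity) (by rw [hminus]; positivity)]; ring_nf
  have hlog_two_mul {k : ℕ} (hk : k ≠ 0) : log (2 * k) = log 2 + log k :=
    log_mul two_ne_zero (by positivity)
  rw [← exp_log (by positivity : (0 : ℝ) < (n.choose z : ℝ) / 2 ^ n), ← exp_log (by positivity :
    (0 : ℝ) < 2 / √(2 * π * n)), ← exp_add, ← exp_add, exp_eq_exp, log_div (by positivity)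
    (by positivity), hlog_choose, log_factorial_eq hn, log_factorial_eq hz,
    log_factorial_eq hm, log_pow, log_div two_ne_zero (by positivity), log_sqrt (by positivity),
    binomialCorrection, log_sqrt pi_pos.le, hlog_sq, hlog_plus, hlog_minus, hlog_two_mul hz,
    hlog_two_mul hm, hlog_two_mul hn, log_mul (by positivity) (by positivity),
    log_mul two_ne_zero pi_ne_zero]
  linear_combination (-1 + (log z + log m) / 2) * hn' + (log z - log m) / 2 * hu

lemma abs_binomialCorrection_le {n z m : ℕ} (hz : z ≠ 0) (hm : m ≠ 0) (hzm : z + m = n) {u : ℝ}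
    (hu : n * u = z - m) (hu8 : |u| ≤ 1 / 8) :
    |binomialCorrection n z m u| ≤ 1 / (2 * n) + u ^ 2 + n * u ^ 4 / 2 := by
  have hn : n ≠ 0 := by omega
  have hn' : (n : ℝ) = z + m := by rw [← hzm]; push_cast; ring
  obtain ⟨hu_lo, hu_hi⟩ := abs_le.1 hu8
  have hz16 : 7 * (n : ℝ) ≤ 16 * z := by nlinarith
  have hm16 : 7 * (n : ℝ) ≤ 16 * m := by nlinarith
  have hstirling : |log (stirlingSeq n) - log (stirlingSeq z) - log (stirlingSeq m) + log √π| ≤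
      1 / (2 * n) := by
    have hlow {k : ℕ} (hk : k ≠ 0) : log √π ≤ log (stirlingSeq k) :=
      log_le_log (by positivity) (sqrt_pi_le_stirlingSeq hk)
    have hn12 : 1 / (12 * (n : ℝ)) ≤ 1 / (2 * n) := by gcongr; norm_num
    have hz12 : 1 / (12 * (z : ℝ)) ≤ 1 / (4 * n) := by
      rw [div_le_div_iff₀ (by positivity) (by positivity)]; linarith
    have hm12 : 1 / (12 * (m : ℝ)) ≤ 1 / (4 * n) := by
      rw [div_le_div_iff₀ (by positivity) (by positivity)]; linarith
    have hhalf : 1 / (4 * (n : ℝ)) + 1 / (4 * n) = 1 / (2 * n) := by field_simp; norm_num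
    rw [abs_le]
    constructor <;> linarith [hlow hn, hlow hz, hlow hm, log_stirlingSeq_le_log_sqrt_pi_add hn,
      log_stirlingSeq_le_log_sqrt_pi_add hz, log_stirlingSeq_le_log_sqrt_pi_add hm]
  have hjacobian : |log (1 - u ^ 2) / 2| ≤ u ^ 2 := by
    have hu2 : u ^ 2 ≤ 1 / 64 := by nlinarith
    rw [abs_div, abs_of_nonpos (log_nonpos (by nlinarith) (by nlinarith)), abs_two]
    linarith [neg_log_one_sub_le (sq_nonneg u) (by linarith), sq_nonneg u]
  have hentropy : |(n : ℝ) / 2 * ((1 + u) * log (1 + u) + (1 - u) * log (1 - u) - u ^ 2)| ≤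
      n * u ^ 4 / 2 := by
    rw [abs_mul, abs_of_pos (by positivity)]
    calc _ ≤ (n : ℝ) / 2 * u ^ 4 := by gcongr; exact abs_entropy_sub_sq_le hu8
      _ = _ := by ring
  unfold binomialCorrection
  exact (abs_sub _ _).trans (add_le_add ((abs_sub _ _).trans (add_le_add hstirling hjacobian))
    hentropy)

lemma abs_choose_div_two_pow_sub_gaussian_le {n z : ℕ} (hn : n ≠ 0) (hzn : z ≤ n) {x : ℝ}
    (hx : √n * x = 2 * z - n) (hx4 : x ^ 4 ≤ n / 4096) :
    |(n.choose z : ℝ) / 2 ^ n - 2 / √(2 * π * n) * exp (-x ^ 2 / 2)| ≤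
      2 * ((1 + x ^ 4) / n) * (2 / √(2 * π * n) * exp (-x ^ 2 / 2)) := by
  have hn1 : (1 : ℝ) ≤ n := by exact_mod_cast Nat.one_le_iff_ne_zero.2 hn
  set u := x / √n with hu_def
  have hx2 : x ^ 2 = n * u ^ 2 := by rw [hu_def, div_pow, sq_sqrt (by positivity)]; field_simp
  have hu : (n : ℝ) * u = z - (n - z : ℕ) := by
    rw [Nat.cast_sub hzn, hu_def, ← mul_div_assoc, mul_div_right_comm, div_sqrt, hx]; ring
  have hu8 : |u| ≤ 1 / 8 := by
    have h : (n : ℝ) ^ 2 * u ^ 4 ≤ n ^ 2 * (1 / 8) ^ 4 := by nlinarith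
    rw [← pow_le_pow_iff_left₀ (abs_nonneg u) (by norm_num) four_ne_zero, pow_abs,
      abs_of_nonneg (by positivity)]
    exact le_of_mul_le_mul_left h (by positivity)
  obtain ⟨hu_lo, hu_hi⟩ := abs_le.1 hu8
  have hz : z ≠ 0 := by
    refine ((Nat.cast_pos (α := ℝ)).1 ?_).ne'
    push_cast [hzn] at hu; nlinarith
  have hm : n - z ≠ 0 := by
    refine ((Nat.cast_pos (α := ℝ)).1 ?_).ne'
    push_cast [hzn] at hu ⊢; nlinarith
  rw [choose_div_two_pow_eq hz hm (Nat.add_sub_cancel' hzn) hu, ← hx2]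
  set L := binomialCorrection n z (n - z) u
  set T := 2 / √(2 * π * n) * exp (-x ^ 2 / 2)
  have hL : |L| ≤ (1 + x ^ 2) ^ 2 / (2 * n) := by
    convert abs_binomialCorrection_le hz hm (Nat.add_sub_cancel' hzn) hu hu8 using 1
    field_simp
    rw [hx2]; ring
  have hL1 : |L| ≤ 1 := hL.trans <| by
    rw [div_le_one (by positivity)]; nlinarith [sq_nonneg (x ^ 2 - 1 / 2)]
  calc |T * exp L - T| = T * |exp L - 1| := by
        rw [← mul_sub_one, abs_mul, abs_of_nonneg (by positivity)]
    _ ≤ T * (2 * ((1 + x ^ 2) ^ 2 / (2 * n))) := by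
        gcongr; exact (abs_exp_sub_one_le hL1).trans (by gcongr)
    _ = (1 + x ^ 2) ^ 2 / n * T := by field_simp
    _ ≤ 2 * ((1 + x ^ 4) / n) * T := by
        rw [mul_div_assoc']; gcongr; nlinarith [sq_nonneg (x ^ 2 - 1)]

end Analytic

/-- **Local limit theorem for the symmetric binomial.**
There is a universal constant `C` such that for every `n ≥ 1`, for i.i.d. `Bernoulli(1/2)`
random variables `X₁, …, Xₙ` (modelled by the product of the measure `μB` on `ℝ` with
`μB {0} = μB {1} = 1/2`), and every
`x ∈ Aₙ = {2z/√n - √n : z = 0, …, n} ∩ [-n^{1/4}/8, n^{1/4}/8]`,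
`|P((2/√n) ∑ (Xᵢ - 1/2) = x) - (2/√(2πn)) e^{-x²/2}| ≤ C (1 + x⁴)/n · (2/√(2πn)) e^{-x²/2}`. -/
theorem binomial_local_limit
    (μB : Measure ℝ) [IsProbabilityMeasure μB]
    (h0 : μB {0} = 1 / 2) (h1 : μB {1} = 1 / 2) :
    ∃ C : ℝ, ∀ n : ℕ, 1 ≤ n → ∀ x : ℝ,
      (∃ z : ℕ, z ≤ n ∧ x = 2 * z / Real.sqrt n - Real.sqrt n) →
      |x| ≤ (n : ℝ) ^ ((1 : ℝ) / 4) / 8 →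
      |((Measure.pi fun _ : Fin n => μB)
            {ω | 2 / Real.sqrt n * ∑ i, (ω i - 1 / 2) = x}).toReal -
          2 / Real.sqrt (2 * Real.pi * n) * Real.exp (-x ^ 2 / 2)|
        ≤ C * ((1 + x ^ 4) / n) * (2 / Real.sqrt (2 * Real.pi * n) * Real.exp (-x ^ 2 / 2)) := by
  refine ⟨2, fun n hn x ⟨z, hzn, hx⟩ hxb => ?_⟩
  have hsqrt : (0 : ℝ) < Real.sqrt n := by positivity
  have hx' : Real.sqrt n * x = 2 * z - n := by
    rw [hx, mul_sub, mul_div_cancel₀ _ hsqrt.ne', Real.mul_self_sqrt (by positivity)]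
  have hx4 : x ^ 4 ≤ n / 4096 := calc
    x ^ 4 = |x| ^ 4 := (Even.pow_abs (by decide) x).symm
    _ ≤ ((n : ℝ) ^ ((1 : ℝ) / 4) / 8) ^ 4 := by gcongr
    _ = n / 4096 := by rw [div_pow, ← Real.rpow_mul_natCast (by positivity)]; norm_num
  have hprob : ((Measure.pi fun _ : Fin n => μB) {ω | ∑ i, ω i = (z : ℝ)}).toReal =
      n.choose z / 2 ^ n := by
    rw [pi_setOf_sum_eq_natCast (ae_eq_zero_or_eq_one (by rw [h0, h1, ENNReal.add_halves])), h0,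
      h1, mul_assoc, ← pow_add, Nat.add_sub_cancel' hzn]
    simp [div_eq_mul_inv]
  rw [setOf_two_div_sqrt_mul_sum_sub_half_eq (by omega) hx', hprob]
  exact abs_choose_div_two_pow_sub_gaussian_le (by omega) hzn hx' hx4
end

section
/- Let X be an integer-valued random variable whose support is {s_0, s_1, s_2, …} (a set of integers with P(X = s_i) > 0 for each i) such that the greatest common divisor of {|s_i − s_0| : i ≥ 1} equals 1. Then there exist a positive integer m and an integer z such that, for X_1, …, X_m i.i.d. copies of X, both P(X_1 + … + X_m = z) > 0 and P(X_1 + … + X_m = z + 1) > 0. Consequently, the law of X_1 + … + X_m − z has a Bernoulli(1/2) component: there exists ε > 0 with Law(X_1 + … + X_m − z) ≥ ε·Ber(1/2) as measures, where Ber(1/2) assigns probability 1/2 to each of 0 and 1. -/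
open MeasureTheory
open scoped ENNReal

/-!
The differences `s - s₀` of support points generate `ℤ` as a group, so `1 = (x + 1) - x` with `x`
and `x + 1` both nonnegative integer combinations of such differences. A combination using `k`
differences is a sum of `k` support points minus `k • s₀`; padding with copies of `s₀` turns `x`
and `x + 1` into sums `z` and `z + 1` of the same number `m` of support points, and the tuple
realizing each sum has positive mass under the `m`-fold product. The smaller of the two masses is
then a weight for the `Bernoulli(1/2)` component.
-/

theorem Int.one_mem_addSubgroupClosure_of_forall_dvd {S : Set ℤ}
    (h : ∀ d : ℕ, (∀ s ∈ S, (d : ℤ) ∣ s) → d = 1) : (1 : ℤ) ∈ AddSubgroup.closure S := by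
  obtain ⟨g, hg⟩ := Int.subgroup_cyclic (AddSubgroup.closure S)
  have hg_dvd : ∀ s ∈ S, (g.natAbs : ℤ) ∣ s := fun s hs => by
    have hs' : s ∈ AddSubgroup.closure S := AddSubgroup.subset_closure hs
    rw [hg, AddSubgroup.mem_closure_singleton] at hs'
    obtain ⟨n, rfl⟩ := hs'
    exact Int.natAbs_dvd.2 (Dvd.intro_left n (smul_eq_mul n g).symm)
  have hg_mem : g ∈ AddSubgroup.closure S := hg ▸ AddSubgroup.subset_closure rfl
  rcases Int.natAbs_eq_iff.1 (h _ hg_dvd) with rfl | rfl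
  · exact hg_mem
  · simpa using neg_mem hg_mem

theorem AddSubgroup.exists_add_mem_addSubmonoidClosure {G : Type*} [AddCommGroup G] {S : Set G}
    {y : G} (hy : y ∈ AddSubgroup.closure S) :
    ∃ x ∈ AddSubmonoid.closure S, x + y ∈ AddSubmonoid.closure S := by
  induction hy using AddSubgroup.closure_induction with
  | mem y hy => exact ⟨0, zero_mem _, by simpa using AddSubmonoid.subset_closure hy⟩
  | zero => exact ⟨0, zero_mem _, by simp⟩
  | add y₁ y₂ _ _ ih₁ ih₂ =>
    obtain ⟨x₁, hx₁, hxy₁⟩ := ih₁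
    obtain ⟨x₂, hx₂, hxy₂⟩ := ih₂
    exact ⟨x₁ + x₂, add_mem hx₁ hx₂, by simpa [add_add_add_comm] using add_mem hxy₁ hxy₂⟩
  | neg y _ ih =>
    obtain ⟨x, hx, hxy⟩ := ih
    exact ⟨x + y, hxy, by simpa using hx⟩

namespace MeasureTheory.Measure

variable {α : Type*} [MeasurableSpace α]

theorem smul_dirac_le {ν : Measure α} {a : α} {c : ℝ≥0∞} (h : c ≤ ν {a}) : c • dirac a ≤ ν := by
  refine Measure.le_iff.2 fun s hs => ?_
  by_cases ha : a ∈ s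
  · simpa [dirac_apply' _ hs, ha] using h.trans (measure_mono (Set.singleton_subset_iff.2 ha))
  · simp [dirac_apply' _ hs, ha]

theorem smul_bernoulli_le {ν : Measure α} {a b : α} {c : ℝ≥0∞} (ha : c ≤ ν {a}) (hb : c ≤ ν {b}) :
    c • ((2⁻¹ : ℝ≥0∞) • dirac a + (2⁻¹ : ℝ≥0∞) • dirac b) ≤ ν := by
  calc c • ((2⁻¹ : ℝ≥0∞) • dirac a + (2⁻¹ : ℝ≥0∞) • dirac b)
      = (2⁻¹ : ℝ≥0∞) • (c • dirac a) + (2⁻¹ : ℝ≥0∞) • (c • dirac b) := by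
        rw [smul_add, smul_comm c, smul_comm c]
    _ ≤ (2⁻¹ : ℝ≥0∞) • ν + (2⁻¹ : ℝ≥0∞) • ν := by
        gcongr
        exacts [smul_dirac_le ha, smul_dirac_le hb]
    _ = ν := by rw [← add_smul, ENNReal.inv_two_add_inv_two, one_smul]

theorem exists_pos_smul_bernoulli_le (ν : Measure α) [IsFiniteMeasure ν] {a b : α}
    (ha : ν {a} ≠ 0) (hb : ν {b} ≠ 0) :
    ∃ ε : ℝ, 0 < ε ∧
      ENNReal.ofReal ε • ((2⁻¹ : ℝ≥0∞) • dirac a + (2⁻¹ : ℝ≥0∞) • dirac b) ≤ ν :=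
  ⟨min (ν {a}).toReal (ν {b}).toReal,
    lt_min (ENNReal.toReal_pos ha (measure_ne_top _ _)) (ENNReal.toReal_pos hb (measure_ne_top _ _)),
    smul_bernoulli_le (ENNReal.ofReal_le_of_le_toReal (min_le_left _ _))
      (ENNReal.ofReal_le_of_le_toReal (min_le_right _ _))⟩

section AddCommMonoid

variable [AddCommMonoid α] {μ : Measure α}

def IsSumOfAtoms (μ : Measure α) (m : ℕ) (z : α) : Prop :=
  ∃ ω : Fin m → α, (∀ i, μ {ω i} ≠ 0) ∧ ∑ i, ω i = z

theorem isSumOfAtoms_nsmul {s : α} (hs : μ {s} ≠ 0) (n : ℕ) : IsSumOfAtoms μ n (n • s) :=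
  ⟨fun _ => s, fun _ => hs, by simp⟩

theorem IsSumOfAtoms.add {m n : ℕ} {z w : α} (hz : IsSumOfAtoms μ m z)
    (hw : IsSumOfAtoms μ n w) : IsSumOfAtoms μ (m + n) (z + w) := by
  obtain ⟨ω, hω, rfl⟩ := hz
  obtain ⟨η, hη, rfl⟩ := hw
  refine ⟨Fin.append ω η, fun i => ?_, by simp [Fin.sum_univ_add]⟩
  induction i using Fin.addCases <;> simp [hω, hη]

theorem IsSumOfAtoms.pi_pos [SigmaFinite μ] {m : ℕ} {z : α} (hz : IsSumOfAtoms μ m z) :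
    0 < (Measure.pi fun _ : Fin m => μ) {ω | ∑ i, ω i = z} := by
  obtain ⟨ω, hω, rfl⟩ := hz
  refine lt_of_lt_of_le ?_ (measure_mono (Set.singleton_subset_iff.2 rfl))
  rw [← Set.univ_pi_singleton, Measure.pi_pi]
  exact pos_iff_ne_zero.2 (Finset.prod_ne_zero_iff.2 fun i _ => hω i)

end AddCommMonoid

section AddCommGroup

variable [AddCommGroup α] {μ : Measure α} {s₀ : α}

theorem exists_isSumOfAtoms_of_mem_addSubmonoidClosure {x : α}
    (hx : x ∈ AddSubmonoid.closure ((· - s₀) '' {s | μ {s} ≠ 0})) :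
    ∃ k : ℕ, IsSumOfAtoms μ k (k • s₀ + x) := by
  induction hx using AddSubmonoid.closure_induction with
  | mem _ hx =>
    obtain ⟨s, hs, rfl⟩ := hx
    exact ⟨1, by simpa using isSumOfAtoms_nsmul hs 1⟩
  | zero => exact ⟨0, Fin.elim0, fun i => i.elim0, by simp⟩
  | add x y _ _ ihx ihy =>
    obtain ⟨k, hk⟩ := ihx
    obtain ⟨l, hl⟩ := ihy
    exact ⟨k + l, by simpa [add_nsmul, add_add_add_comm] using hk.add hl⟩

theorem exists_isSumOfAtoms_add_of_mem_addSubgroupClosure (hs₀ : μ {s₀} ≠ 0) {y : α}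
    (hy : y ∈ AddSubgroup.closure ((· - s₀) '' {s | μ {s} ≠ 0})) :
    ∃ m, 0 < m ∧ ∃ z, IsSumOfAtoms μ m z ∧ IsSumOfAtoms μ m (z + y) := by
  obtain ⟨x, hx, hxy⟩ := AddSubgroup.exists_add_mem_addSubmonoidClosure hy
  obtain ⟨k, hk⟩ := exists_isSumOfAtoms_of_mem_addSubmonoidClosure hx
  obtain ⟨l, hl⟩ := exists_isSumOfAtoms_of_mem_addSubmonoidClosure hxy
  refine ⟨k + (l + 1), by omega, k • s₀ + x + (l + 1) • s₀,
    hk.add (isSumOfAtoms_nsmul hs₀ _), ?_⟩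
  convert hl.add (isSumOfAtoms_nsmul hs₀ (k + 1)) using 1
  · omega
  · simp only [add_nsmul, one_nsmul]
    abel

end AddCommGroup

end MeasureTheory.Measure

/-- **Existence of a Bernoulli(1/2) component.**
Let `X` be an integer-valued random variable with law `μ` whose support differences from a
support point `s₀` have greatest common divisor `1`. Then there exist a positive integer
`m` and an integer `z` such that the sum of `m` i.i.d. copies of `X` takes both values `z`
and `z + 1` with positive probability; consequently, the law of `X₁ + ⋯ + X_m - z` has a
`Bernoulli(1/2)` component with some weight `ε > 0`. -/
theorem exists_bernoulli_component
    (μ : Measure ℤ) (hprob : IsProbabilityMeasure μ)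
    (s₀ : ℤ) (hs₀ : μ {s₀} ≠ 0)
    (hgcd : ∀ d : ℕ, (∀ s : ℤ, μ {s} ≠ 0 → (d : ℤ) ∣ (s - s₀)) → d = 1) :
    ∃ m : ℕ, 0 < m ∧ ∃ z : ℤ,
      0 < (Measure.pi fun _ : Fin m => μ) {ω | (∑ i, ω i) = z} ∧
      0 < (Measure.pi fun _ : Fin m => μ) {ω | (∑ i, ω i) = z + 1} ∧
      ∃ ε : ℝ, 0 < ε ∧
        ENNReal.ofReal ε •
            ((2⁻¹ : ℝ≥0∞) • Measure.dirac (0 : ℤ) + (2⁻¹ : ℝ≥0∞) • Measure.dirac (1 : ℤ))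
          ≤ Measure.map (fun ω : Fin m → ℤ => (∑ i, ω i) - z)
              (Measure.pi fun _ : Fin m => μ) := by
  have hone : (1 : ℤ) ∈ AddSubgroup.closure ((· - s₀) '' {s | μ {s} ≠ 0}) :=
    Int.one_mem_addSubgroupClosure_of_forall_dvd fun d hd =>
      hgcd d fun s hs => hd _ ⟨s, hs, rfl⟩
  obtain ⟨m, hm, z, hz, hz₁⟩ :=
    Measure.exists_isSumOfAtoms_add_of_mem_addSubgroupClosure hs₀ hone
  refine ⟨m, hm, z, hz.pi_pos, hz₁.pi_pos, ?_⟩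
  set P := Measure.pi fun _ : Fin m => μ
  have hf : Measurable fun ω : Fin m → ℤ => (∑ i, ω i) - z := by fun_prop
  have hmap (k : ℤ) : P.map (fun ω => (∑ i, ω i) - z) {k} = P {ω | ∑ i, ω i = z + k} := by
    rw [Measure.map_apply hf (measurableSet_singleton k)]
    congr 1
    ext ω
    simp [sub_eq_iff_eq_add']
  have := Measure.isProbabilityMeasure_map (μ := P) hf.aemeasurable
  exact Measure.exists_pos_smul_bernoulli_le _
    (by simpa [hmap] using hz.pi_pos.ne') (by simpa [hmap] using hz₁.pi_pos.ne')
end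

section
/- Let X be a real random variable with E[X] = 0 whose law F has a component p_1·F_1 with p_1 > 0, where F_1 is a probability measure supported on a compact interval [a_1, a_2] with a_1 < a_2, absolutely continuous with density bounded away from 0 on [a_1, a_2]. Then there exist a positive integer m, a constant p > 0, a compact interval [a, b] with a < 0 < b, a constant c > 0, and a probability measure ν supported on [a, b], absolutely continuous with density ≥ c on [a, b], satisfying ∫ x dν(x) = 0, such that the m-fold convolution F^{*m} (the law of the sum of m i.i.d. copies of X) satisfies F^{*m} ≥ p·ν as measures. -/
/-!
Let `γ` be the midpoint and `2h` the length of `[a₁, a₂]`, so that `F ≥ p₁c₁ · Leb|[γ-h, γ+h]`.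
If `μ ≥ c · Leb|[lo, hi]`, then `F ∗ μ ≥ F([s-η, s+η]) c · Leb|[lo+s+η, hi+s-η]`: convolving with
`F` moves the window by `s` and shrinks it by `2η`, at the cost of a factor that is positive when
`s` lies in the support of `F`. As `F` is centered and not a point mass, its support contains
some `t ≠ 0` on the other side of `0` from `γ`, and Dirichlet's approximation theorem gives
`k ≥ 1` and `j` with `|kγ + jt| ≤ h/4`. Moving the window `k - 1` times by `γ` and `j` times by
`t`, with `η` so small that the total shrinkage is at most `h`, leaves a multiple of Lebesgue
measure on `[-h/4, h/4]` below `F^{*(k+j)}`; its normalization is the required `ν`.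
-/

open MeasureTheory Measure Set
open scoped ENNReal

namespace MeasureTheory.Measure

section AddMonoid

variable {M : Type*} [AddMonoid M] [MeasurableSpace M] [MeasurableAdd₂ M]

lemma conv_apply (μ ν : Measure M) [SFinite ν] {s : Set M} (hs : MeasurableSet s) :
    (μ ∗ ν) s = ∫⁻ x, ν ((x + ·) ⁻¹' s) ∂μ := by
  rw [conv, map_apply measurable_add hs, prod_apply (measurable_add hs)]
  rfl

lemma smul_le_conv_of_le_map_add {ρ ν ν' : Measure M} [SFinite ν] {s : Set M}
    (hs : MeasurableSet s) (h : ∀ x ∈ s, ν' ≤ ν.map (x + ·)) : ρ s • ν' ≤ ρ ∗ ν := by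
  refine le_iff.2 fun A hA => ?_
  calc (ρ s • ν') A = ∫⁻ _ in s, ν' A ∂ρ := by simp [mul_comm]
    _ ≤ ∫⁻ x in s, ν ((x + ·) ⁻¹' A) ∂ρ := setLIntegral_mono' hs fun x hx => by
        simpa [map_apply (measurable_const_add x) hA] using le_iff.1 (h x hx) A hA
    _ ≤ (ρ ∗ ν) A := by rw [conv_apply _ _ hA]; exact lintegral_mono' restrict_le_self le_rfl

end AddMonoid

section AddCommMonoid

variable {M : Type*} [AddCommMonoid M] [MeasurableSpace M]

noncomputable def convPow (μ : Measure M) (n : ℕ) : Measure M :=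
  (Measure.pi fun _ : Fin n => μ).map fun ω => ∑ i, ω i

lemma convPow_zero (μ : Measure M) : convPow μ 0 = dirac 0 := by
  simp [convPow]

instance (μ : Measure M) [SigmaFinite μ] (n : ℕ) : SFinite (convPow μ n) := by
  unfold convPow; infer_instance

variable [MeasurableAdd₂ M]

lemma convPow_succ (μ : Measure M) [SigmaFinite μ] (n : ℕ) :
    convPow μ (n + 1) = μ ∗ convPow μ n := by
  have hsplit := (measurePreserving_piFinSuccAbove (fun _ : Fin (n + 1) => μ) 0).symm
  have hprod := map_prod_map μ (Measure.pi fun _ : Fin n => μ) measurable_id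
    (by fun_prop : Measurable fun ω : Fin n → M => ∑ i, ω i)
  rw [map_id] at hprod
  rw [convPow, ← hsplit.map_eq, map_map (by fun_prop) (by fun_prop), conv, convPow, hprod,
    map_map (by fun_prop) (by fun_prop)]
  congr 1
  ext p
  simp [MeasurableEquiv.piFinSuccAbove, Fin.insertNthEquiv, Fin.sum_univ_succ]

lemma convPow_one (μ : Measure M) [SigmaFinite μ] : convPow μ 1 = μ := by
  rw [convPow_succ, convPow_zero, conv_dirac_zero]

end AddCommMonoid

end MeasureTheory.Measure

lemma map_add_left_volume_restrict_Icc (x a b : ℝ) :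
    (volume.restrict (Icc a b)).map (x + ·) = volume.restrict (Icc (x + a) (x + b)) := by
  have hpre : (x + ·) ⁻¹' Icc (x + a) (x + b) = Icc a b := by simp
  rw [← hpre, ← restrict_map (measurable_const_add x) measurableSet_Icc, map_add_left_eq_self]

lemma smul_restrict_Icc_le_conv {ρ ν : Measure ℝ} [SFinite ν] {c : ℝ≥0∞} {lo hi : ℝ}
    (hν : c • volume.restrict (Icc lo hi) ≤ ν) (t η : ℝ) :
    (ρ (Icc (t - η) (t + η)) * c) • volume.restrict (Icc (lo + t + η) (hi + t - η)) ≤ ρ ∗ ν := by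
  rw [mul_smul]
  refine smul_le_conv_of_le_map_add measurableSet_Icc fun x hx => ?_
  calc c • volume.restrict (Icc (lo + t + η) (hi + t - η))
      ≤ c • volume.restrict (Icc (x + lo) (x + hi)) := by
        obtain ⟨hx₁, hx₂⟩ := hx
        gcongr c • volume.restrict ?_
        exact Icc_subset_Icc (by linarith) (by linarith)
    _ = (c • volume.restrict (Icc lo hi)).map (x + ·) := by
        rw [Measure.map_smul, map_add_left_volume_restrict_Icc]
    _ ≤ ν.map (x + ·) := map_mono hν (measurable_const_add x)

lemma smul_restrict_Icc_le_convPow_add {μ : Measure ℝ} [SigmaFinite μ] {c : ℝ≥0∞} {lo hi : ℝ}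
    {k : ℕ} (hk : c • volume.restrict (Icc lo hi) ≤ convPow μ k) (t η : ℝ) (n : ℕ) :
    (μ (Icc (t - η) (t + η)) ^ n * c) •
      volume.restrict (Icc (lo + n * (t + η)) (hi + n * (t - η))) ≤ convPow μ (n + k) := by
  induction n with
  | zero => simpa using hk
  | succ n ih =>
    rw [add_right_comm, convPow_succ, pow_succ', mul_assoc]
    convert smul_restrict_Icc_le_conv ih t η using 4 <;> push_cast <;> ring

lemma exists_nat_abs_mul_add_mul_le {x t ε : ℝ} (ht : t ≠ 0) (hxt : x * t ≤ 0) (hε : 0 < ε) :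
    ∃ k j : ℕ, 0 < k ∧ |k * x + j * t| ≤ ε := by
  set ξ := -x / t with hξ
  have hξ_nonneg : 0 ≤ ξ := by
    rw [hξ, ← mul_div_mul_right _ _ ht, ← sq]
    exact div_nonneg (by linarith) (sq_nonneg t)
  obtain ⟨N, hN⟩ := exists_nat_gt (|t| / ε)
  obtain ⟨j, k, hk, -, hjk⟩ := Real.exists_int_int_abs_mul_sub_le ξ (n := N + 1) N.succ_pos
  push_cast at hjk
  have hj : 0 ≤ j := by
    have hN₁ : (1 : ℝ) / (N + 1 + 1) < 1 := by
      rw [div_lt_one (by positivity)]; linarith [N.cast_nonneg (α := ℝ)]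
    have hkξ : (0 : ℝ) ≤ k * ξ := mul_nonneg (by exact_mod_cast hk.le) hξ_nonneg
    have hj : (-1 : ℝ) < j := by linarith [(abs_le.1 hjk).2]
    have hj : (-1 : ℤ) < j := by exact_mod_cast hj
    omega
  lift k to ℕ using hk.le
  lift j to ℕ using hj
  refine ⟨k, j, by exact_mod_cast hk, ?_⟩
  have hdecomp : (k : ℝ) * x + j * t = -t * (k * ξ - j) := by rw [hξ]; field_simp; ring
  push_cast at hjk
  calc |(k : ℝ) * x + j * t| = |t| * |k * ξ - j| := by rw [hdecomp, abs_mul, abs_neg]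
    _ ≤ |t| * (1 / (N + 1 + 1)) := by gcongr
    _ ≤ ε := by
      rw [div_lt_iff₀ hε] at hN
      rw [mul_one_div, div_le_iff₀ (by positivity)]
      nlinarith [N.cast_nonneg (α := ℝ)]

lemma measure_setOf_pos_eq_zero_of_integral_eq_zero {α : Type*} [MeasurableSpace α]
    {μ : Measure α} {f : α → ℝ} (hf : Integrable f μ) (h0 : ∫ a, f a ∂μ = 0)
    (hneg : μ {a | f a < 0} = 0) : μ {a | 0 < f a} = 0 := by
  have hnonneg : 0 ≤ᵐ[μ] f := ae_iff.2 (by simpa only [Pi.zero_apply, not_le] using hneg)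
  have hzero : f =ᵐ[μ] 0 := (integral_eq_zero_iff_of_nonneg_ae hnonneg hf).1 h0
  exact measure_mono_null (fun a ha => ne_of_gt ha) (ae_iff.1 hzero)

lemma exists_mem_support_ne_zero_mul_nonpos {μ : Measure ℝ} (hint : Integrable (fun x => x) μ)
    (hmean : ∫ x, x ∂μ = 0) (hne : μ {0}ᶜ ≠ 0) (x : ℝ) :
    ∃ t ∈ μ.support, t ≠ 0 ∧ x * t ≤ 0 := by
  have hIio_of_Ioi : μ (Iio 0) = 0 → μ (Ioi 0) = 0 :=
    measure_setOf_pos_eq_zero_of_integral_eq_zero hint hmean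
  have hIoi_of_Iio : μ (Ioi 0) = 0 → μ (Iio 0) = 0 := fun h => by
    have h' := measure_setOf_pos_eq_zero_of_integral_eq_zero (f := fun x => -x) hint.neg
      (by rw [integral_neg, hmean, neg_zero]) (by simp only [neg_lt_zero]; exact h)
    simp only [neg_pos] at h'
    exact h'
  have hboth : μ (Iio 0) ≠ 0 ∧ μ (Ioi 0) ≠ 0 := by
    by_contra! h
    refine hne ?_
    rw [← Iio_union_Ioi]
    by_cases h₀ : μ (Iio 0) = 0
    · exact measure_union_null h₀ (hIio_of_Ioi h₀)
    · exact measure_union_null (hIoi_of_Iio (h h₀)) (h h₀)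
  rcases le_or_gt 0 x with hx | hx
  · obtain ⟨t, ht, htμ⟩ := nonempty_inter_support_of_pos (pos_iff_ne_zero.2 hboth.1)
    exact ⟨t, htμ, ht.ne, mul_nonpos_of_nonneg_of_nonpos hx (le_of_lt ht)⟩
  · obtain ⟨t, ht, htμ⟩ := nonempty_inter_support_of_pos (pos_iff_ne_zero.2 hboth.2)
    exact ⟨t, htμ, ht.ne', mul_nonpos_of_nonpos_of_nonneg hx.le (le_of_lt ht)⟩

lemma measure_Icc_pos_of_mem_support {μ : Measure ℝ} {t : ℝ} (ht : t ∈ μ.support) {η : ℝ}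
    (hη : 0 < η) : 0 < μ (Icc (t - η) (t + η)) :=
  (mem_support_iff_forall t).1 ht _ (Icc_mem_nhds (by linarith) (by linarith))

lemma Ioo_subset_support_of_smul_restrict_le {μ : Measure ℝ} {c : ℝ≥0∞} (hc : c ≠ 0) {a b : ℝ}
    (hμ : c • volume.restrict (Icc a b) ≤ μ) : Ioo a b ⊆ μ.support := by
  have := isOpenPosMeasure_smul (volume : Measure ℝ) hc
  calc Ioo a b = interior (Icc a b) ∩ (c • volume).support := by
        rw [support_eq_univ, inter_univ, interior_Icc]
    _ ⊆ ((c • volume).restrict (Icc a b)).support := interior_inter_support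
    _ ⊆ μ.support := support_mono (by rwa [restrict_smul])

lemma smul_restrict_le_withDensity {α : Type*} [MeasurableSpace α] {μ : Measure α} {s : Set α}
    (hs : MeasurableSet s) {c : ℝ≥0∞} {d : α → ℝ≥0∞} (hd : ∀ x ∈ s, c ≤ d x) :
    c • μ.restrict s ≤ μ.withDensity d := by
  rw [← withDensity_const, ← withDensity_indicator hs]
  refine withDensity_mono (Filter.Eventually.of_forall fun x => ?_)
  by_cases hx : x ∈ s
  · simpa [hx] using hd x hx
  · simp [hx]

theorem exists_smul_restrict_Icc_le_convPow {F : Measure ℝ} [IsFiniteMeasure F]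
    (hint : Integrable (fun x => x) F) (hmean : ∫ x, x ∂F = 0) {a₁ a₂ : ℝ} (ha : a₁ < a₂)
    {c : ℝ≥0∞} (hc₀ : c ≠ 0) (hc : c ≠ ∞) (hF : c • volume.restrict (Icc a₁ a₂) ≤ F) :
    ∃ m, 0 < m ∧ ∃ r : ℝ, 0 < r ∧ ∃ c' : ℝ≥0∞, c' ≠ 0 ∧ c' ≠ ∞ ∧
      c' • volume.restrict (Icc (-r) r) ≤ convPow F m := by
  set h := (a₂ - a₁) / 2
  set γ := (a₁ + a₂) / 2
  have hh : 0 < h := by simp only [h]; linarith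
  have hγ : γ ∈ F.support := Ioo_subset_support_of_smul_restrict_le hc₀ hF
    ⟨by simp only [γ]; linarith, by simp only [γ]; linarith⟩
  have hne : F {0}ᶜ ≠ 0 := by
    refine (lt_of_lt_of_le ?_ (le_iff'.1 hF _)).ne'
    rw [Measure.smul_apply, restrict_apply' measurableSet_Icc, ← sdiff_eq_compl_inter,
      measure_sdiff_null (measure_singleton 0), Real.volume_Icc, smul_eq_mul]
    exact ENNReal.mul_pos hc₀ (ENNReal.ofReal_pos.2 (by linarith)).ne'
  obtain ⟨t, ht, ht₀, hγt⟩ := exists_mem_support_ne_zero_mul_nonpos hint hmean hne γ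
  obtain ⟨k, j, hk, hkj⟩ := exists_nat_abs_mul_add_mul_le ht₀ hγt (by positivity : 0 < h / 4)
  obtain ⟨K, rfl⟩ : ∃ K, k = K + 1 := ⟨k - 1, by omega⟩
  set η := h / (2 * (K + j + 1))
  have hη : 0 < η := by positivity
  have hshrink : (K + j) * η ≤ h / 2 := by
    simp only [η]
    rw [← mul_div_assoc, div_le_div_iff₀ (by positivity) (by norm_num)]
    nlinarith
  have h₁ := smul_restrict_Icc_le_convPow_add (μ := F) (k := 1) (by rwa [convPow_one]) γ η K
  have h₂ := smul_restrict_Icc_le_convPow_add h₁ t η j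
  refine ⟨j + (K + 1), by omega, h / 4, by positivity,
    F (Icc (t - η) (t + η)) ^ j * (F (Icc (γ - η) (γ + η)) ^ K * c), ?_, ?_, le_trans ?_ h₂⟩
  · exact mul_ne_zero (pow_ne_zero _ (measure_Icc_pos_of_mem_support ht hη).ne')
      (mul_ne_zero (pow_ne_zero _ (measure_Icc_pos_of_mem_support hγ hη).ne') hc₀)
  · exact ENNReal.mul_ne_top (ENNReal.pow_ne_top (measure_ne_top _ _))
      (ENNReal.mul_ne_top (ENNReal.pow_ne_top (measure_ne_top _ _)) hc)
  · gcongr _ • volume.restrict ?_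
    push_cast at hkj
    obtain ⟨hlo, hhi⟩ := abs_le.1 hkj
    refine Icc_subset_Icc ?_ ?_ <;> simp only [h, γ] at hlo hhi hshrink ⊢ <;> nlinarith

lemma exists_centered_uniform_le {μ : Measure ℝ} {r : ℝ} (hr : 0 < r) {c : ℝ≥0∞} (hc₀ : c ≠ 0)
    (hc : c ≠ ∞) (hμ : c • volume.restrict (Icc (-r) r) ≤ μ) :
    ∃ p : ℝ, 0 < p ∧ ∃ (ν : Measure ℝ) (d : ℝ → ℝ≥0∞), IsProbabilityMeasure ν ∧
      ν = volume.withDensity d ∧ (∀ x ∈ Icc (-r) r, ENNReal.ofReal (2 * r)⁻¹ ≤ d x) ∧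
      (∀ x ∉ Icc (-r) r, d x = 0) ∧ ∫ x, x ∂ν = 0 ∧ ENNReal.ofReal p • ν ≤ μ := by
  set d := (Icc (-r) r).indicator fun _ => ENNReal.ofReal (2 * r)⁻¹
  have hν : volume.withDensity d = ENNReal.ofReal (2 * r)⁻¹ • volume.restrict (Icc (-r) r) := by
    rw [withDensity_indicator measurableSet_Icc, withDensity_const]
  have hc' : 0 < c.toReal := ENNReal.toReal_pos hc₀ hc
  refine ⟨2 * r * c.toReal, by positivity, volume.withDensity d, d, ⟨?_⟩, rfl,
    fun x hx => by simp [d, hx], fun x hx => by simp [d, hx], ?_, ?_⟩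
  · rw [hν, Measure.smul_apply, restrict_apply_univ, Real.volume_Icc, smul_eq_mul,
      ← ENNReal.ofReal_mul (by positivity)]
    rw [show (2 * r)⁻¹ * (r - -r) = 1 by field_simp; ring, ENNReal.ofReal_one]
  · rw [hν, integral_smul_measure, integral_Icc_eq_integral_Ioc,
      ← intervalIntegral.integral_of_le (by linarith), integral_id]
    simp
  · rw [hν, smul_smul, ← ENNReal.ofReal_mul (by positivity),
      show 2 * r * c.toReal * (2 * r)⁻¹ = c.toReal by field_simp, ENNReal.ofReal_toReal hc]
    exact hμ

theorem exists_centered_continuous_component_general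
    (F : Measure ℝ) (hFprob : IsProbabilityMeasure F)
    (hint : Integrable (fun x => x) F) (hmean : ∫ x, x ∂F = 0)
    (p₁ : ℝ) (hp₁ : 0 < p₁)
    (a₁ a₂ : ℝ) (ha : a₁ < a₂)
    (F₁ : Measure ℝ)
    (d₁ : ℝ → ℝ≥0∞) (hF₁ : F₁ = volume.withDensity d₁)
    (c₁ : ℝ) (hc₁ : 0 < c₁)
    (hd₁ : ∀ x ∈ Set.Icc a₁ a₂, ENNReal.ofReal c₁ ≤ d₁ x)
    (hcomp : ENNReal.ofReal p₁ • F₁ ≤ F) :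
    ∃ m : ℕ, 0 < m ∧ ∃ p : ℝ, 0 < p ∧ ∃ a b : ℝ, a < 0 ∧ 0 < b ∧
      ∃ c : ℝ, 0 < c ∧ ∃ (ν : Measure ℝ) (d : ℝ → ℝ≥0∞),
        IsProbabilityMeasure ν ∧
        ν = volume.withDensity d ∧
        (∀ x ∈ Set.Icc a b, ENNReal.ofReal c ≤ d x) ∧
        (∀ x ∉ Set.Icc a b, d x = 0) ∧
        (∫ x, x ∂ν) = 0 ∧
        ENNReal.ofReal p • ν ≤
          Measure.map (fun ω : Fin m → ℝ => ∑ i, ω i) (Measure.pi fun _ : Fin m => F) := by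
  have hbase : (ENNReal.ofReal p₁ * ENNReal.ofReal c₁) • volume.restrict (Icc a₁ a₂) ≤ F := by
    rw [mul_smul]
    refine le_trans ?_ hcomp
    gcongr
    exact hF₁ ▸ smul_restrict_le_withDensity measurableSet_Icc hd₁
  obtain ⟨m, hm, r, hr, c, hc₀, hc, hle⟩ := exists_smul_restrict_Icc_le_convPow hint hmean ha
    (by positivity) (by finiteness) hbase
  obtain ⟨p, hp, ν, d, hν⟩ := exists_centered_uniform_le hr hc₀ hc hle
  exact ⟨m, hm, p, hp, -r, r, by linarith, hr, (2 * r)⁻¹, by positivity, ν, d, hν⟩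

/-- **Centering the continuous component by finite convolution.**
Let `X` have law `F` with mean `0`, and suppose `F` has a component `p₁ F₁` with `p₁ > 0`,
where `F₁` is supported on a compact interval `[a₁, a₂]` (`a₁ < a₂`) and is absolutely
continuous with density bounded below by `c₁ > 0` on `[a₁, a₂]`. Then there exist a
positive integer `m`, a weight `p > 0`, a compact interval `[a, b]` with `a < 0 < b`, a
lower bound `c > 0` and a probability measure `ν`, absolutely continuous with density `≥ c`
on `[a, b]` and vanishing outside `[a, b]`, with mean `0`, such that `F^{*m} ≥ p ν`. -/
theorem exists_centered_continuous_component
    (F : Measure ℝ) (hFprob : IsProbabilityMeasure F)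
    (hint : Integrable (fun x => x) F) (hmean : ∫ x, x ∂F = 0)
    (p₁ : ℝ) (hp₁ : 0 < p₁)
    (a₁ a₂ : ℝ) (ha : a₁ < a₂)
    (F₁ : Measure ℝ) (hF₁prob : IsProbabilityMeasure F₁)
    (d₁ : ℝ → ℝ≥0∞) (hF₁ : F₁ = volume.withDensity d₁)
    (c₁ : ℝ) (hc₁ : 0 < c₁)
    (hd₁ : ∀ x ∈ Set.Icc a₁ a₂, ENNReal.ofReal c₁ ≤ d₁ x)
    (hd₁' : ∀ x ∉ Set.Icc a₁ a₂, d₁ x = 0)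
    (hcomp : ENNReal.ofReal p₁ • F₁ ≤ F) :
    ∃ m : ℕ, 0 < m ∧ ∃ p : ℝ, 0 < p ∧ ∃ a b : ℝ, a < 0 ∧ 0 < b ∧
      ∃ c : ℝ, 0 < c ∧ ∃ (ν : Measure ℝ) (d : ℝ → ℝ≥0∞),
        IsProbabilityMeasure ν ∧
        ν = volume.withDensity d ∧
        (∀ x ∈ Set.Icc a b, ENNReal.ofReal c ≤ d x) ∧
        (∀ x ∉ Set.Icc a b, d x = 0) ∧
        (∫ x, x ∂ν) = 0 ∧
        ENNReal.ofReal p • ν ≤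
          Measure.map (fun ω : Fin m → ℝ => ∑ i, ω i) (Measure.pi fun _ : Fin m => F) :=
  exists_centered_continuous_component_general F hFprob hint hmean p₁ hp₁ a₁ a₂ ha F₁ d₁ hF₁ c₁ hc₁
    hd₁ hcomp
end
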